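/- arXiv:1910.01706 — 5 statements merged into one kernel-verified Lean document; each statement's English description precedes it below -/
import Mathlib

section
/- For η > 0, the triple with G(x) = (1/η) ln(Σ_i e^{η x_i}), g(x)_i = e^{η x_i}/Σ_j e^{η x_j}, and γ(x) = (η/2)‖x‖_∞² is a Gordon triple: for all x, y ∈ R^n, G(x + y) ≤ G(x) + g(x)·y + (η/2)‖y‖_∞². -/
open Finset

set_option maxHeartbeats 1000000 in
/-- For `η > 0`, the scaled log-sum-exp `G`, the softmax `g`, and
`γ(y) = (η/2)‖y‖_∞²` form a Gordon triple:
`G(x+y) ≤ G(x) + g(x)·y + (η/2)‖y‖_∞²`. -/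
theorem gordon_triple_exp
    {ι : Type*} [Fintype ι] [Nonempty ι] (η : ℝ) (hη : 0 < η) (x y : ι → ℝ) :
    (1 / η) * Real.log (∑ i, Real.exp (η * (x i + y i))) ≤
      (1 / η) * Real.log (∑ i, Real.exp (η * x i)) +
      (∑ i, (Real.exp (η * x i) / ∑ j, Real.exp (η * x j)) * y i) +
      (η / 2) * (Finset.univ.sup' Finset.univ_nonempty (fun i => |y i|)) ^ 2 := by
  classical
  set M : ℝ := Finset.univ.sup' Finset.univ_nonempty (fun i => |y i|) with hM
  have hyM : ∀ i, |y i| ≤ M := fun i => Finset.le_sup' (fun i => |y i|) (Finset.mem_univ i)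
  have hM0 : 0 ≤ M := (abs_nonneg _).trans (hyM (Classical.arbitrary ι))
  set S : ℝ → ℝ := fun t => ∑ i, Real.exp (η * (x i + t * y i)) with hSdef
  set A : ℝ → ℝ := fun t => ∑ i, y i * Real.exp (η * (x i + t * y i)) with hAdef
  set B : ℝ → ℝ := fun t => ∑ i, (y i) ^ 2 * Real.exp (η * (x i + t * y i)) with hBdef
  have hSpos : ∀ t, 0 < S t := by
    intro t
    exact Finset.sum_pos (fun i _ => Real.exp_pos _) Finset.univ_nonempty
  have hexp : ∀ (i : ι) (t : ℝ),
      HasDerivAt (fun s => Real.exp (η * (x i + s * y i)))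
        (η * y i * Real.exp (η * (x i + t * y i))) t := by
    intro i t
    have h1 : HasDerivAt (fun s : ℝ => η * (x i + s * y i)) (η * y i) t := by
      have : HasDerivAt (fun s : ℝ => x i + s * y i) (y i) t := by
        simpa using ((hasDerivAt_id t).mul_const (y i)).const_add (x i)
      simpa [mul_comm] using this.const_mul η
    simpa [mul_comm, mul_assoc] using h1.exp
  have hS' : ∀ t, HasDerivAt S (η * A t) t := by
    intro t
    have := HasDerivAt.fun_sum (fun i (_ : i ∈ Finset.univ) => hexp i t)
    have heq : (∑ i, η * y i * Real.exp (η * (x i + t * y i))) = η * A t := by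
      rw [hAdef, Finset.mul_sum]
      exact Finset.sum_congr rfl fun i _ => by ring
    rw [heq] at this
    exact this
  have hA' : ∀ t, HasDerivAt A (η * B t) t := by
    intro t
    have h := HasDerivAt.fun_sum (fun i (_ : i ∈ Finset.univ) =>
      (hexp i t).const_mul (y i))
    have heq : (∑ i, y i * (η * y i * Real.exp (η * (x i + t * y i)))) = η * B t := by
      rw [hBdef, Finset.mul_sum]
      exact Finset.sum_congr rfl fun i _ => by ring
    rw [heq] at h
    exact h
  have hg1' : ∀ t, HasDerivAt (fun s => A s / S s)
      ((η * B t * S t - A t * (η * A t)) / (S t) ^ 2) t := by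
    intro t
    exact (hA' t).div (hS' t) (hSpos t).ne'
  -- key bound on the second derivative
  have hbound : ∀ t, (η * B t * S t - A t * (η * A t)) / (S t) ^ 2 ≤ η * M ^ 2 := by
    intro t
    have hS2 : (0:ℝ) < (S t) ^ 2 := pow_pos (hSpos t) 2
    rw [div_le_iff₀ hS2]
    have hB : B t ≤ M ^ 2 * S t := by
      rw [hBdef, hSdef]
      simp only []
      rw [Finset.mul_sum]
      refine Finset.sum_le_sum fun i _ => ?_
      have : (y i) ^ 2 ≤ M ^ 2 := by
        have := hyM i
        nlinarith [abs_nonneg (y i), sq_abs (y i)]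
      exact mul_le_mul_of_nonneg_right this (Real.exp_pos _).le
    nlinarith [hSpos t, sq_nonneg (A t), mul_le_mul_of_nonneg_right hB (mul_pos hη (hSpos t)).le]
  set D : ℝ → ℝ := fun t => A 0 / S 0 + η * M ^ 2 * t - A t / S t with hDdef
  have hD' : ∀ t, HasDerivAt D
      (η * M ^ 2 - (η * B t * S t - A t * (η * A t)) / (S t) ^ 2) t := by
    intro t
    have h1 : HasDerivAt (fun s : ℝ => A 0 / S 0 + η * M ^ 2 * s) (η * M ^ 2) t := by
      simpa using ((hasDerivAt_id t).const_mul (η * M ^ 2)).const_add (A 0 / S 0)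
    exact h1.sub (hg1' t)
  have hDmono : Monotone D := by
    apply monotone_of_deriv_nonneg
    · exact fun t => (hD' t).differentiableAt
    · intro t
      rw [(hD' t).deriv]
      linarith [hbound t]
  have hD0 : D 0 = 0 := by simp [hDdef]
  have hDnonneg : ∀ t, 0 ≤ t → 0 ≤ D t := by
    intro t ht
    rw [← hD0]; exact hDmono ht
  set ψ : ℝ → ℝ := fun t =>
    (1 / η) * Real.log (S 0) + t * (A 0 / S 0) + η * M ^ 2 / 2 * t ^ 2
      - (1 / η) * Real.log (S t) with hψdef
  have hψ' : ∀ t, HasDerivAt ψ (D t) t := by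
    intro t
    have hlog : HasDerivAt (fun s => (1 / η) * Real.log (S s)) (A t / S t) t := by
      have h := ((hS' t).log (hSpos t).ne').const_mul (1 / η)
      have : 1 / η * (η * A t / S t) = A t / S t := by
        rw [mul_div_assoc, ← mul_assoc, one_div_mul_cancel hη.ne', one_mul]
      rwa [this] at h
    have h1 : HasDerivAt (fun s : ℝ =>
        (1 / η) * Real.log (S 0) + s * (A 0 / S 0) + η * M ^ 2 / 2 * s ^ 2)
        (A 0 / S 0 + η * M ^ 2 * t) t := by
      have ha : HasDerivAt (fun s : ℝ => s * (A 0 / S 0)) (A 0 / S 0) t := by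
        simpa using (hasDerivAt_id t).mul_const (A 0 / S 0)
      have hb : HasDerivAt (fun s : ℝ => η * M ^ 2 / 2 * s ^ 2) (η * M ^ 2 * t) t := by
        have h := (hasDerivAt_pow 2 t).const_mul (η * M ^ 2 / 2)
        refine h.congr_deriv ?_
        push_cast
        ring
      exact (ha.const_add _).add hb
    rw [hψdef, hDdef]
    exact h1.sub hlog
  have hψmono : MonotoneOn ψ (Set.Ici (0:ℝ)) := by
    apply monotoneOn_of_deriv_nonneg (convex_Ici 0)
    · exact (Differentiable.continuous fun t => (hψ' t).differentiableAt).continuousOn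
    · exact fun t _ => (hψ' t).differentiableAt.differentiableWithinAt
    · intro t ht
      rw [(hψ' t).deriv]
      exact hDnonneg t (le_of_lt (by simpa using ht))
  have key : ψ 0 ≤ ψ 1 := hψmono (Set.mem_Ici.mpr le_rfl) (Set.mem_Ici.mpr zero_le_one) zero_le_one
  have hψ0 : ψ 0 = 0 := by simp [hψdef]
  rw [hψ0] at key
  have hS1 : S 1 = ∑ i, Real.exp (η * (x i + y i)) := by simp [hSdef]
  have hS0 : S 0 = ∑ i, Real.exp (η * x i) := by simp [hSdef]
  have hA0 : A 0 / S 0 = ∑ i, (Real.exp (η * x i) / ∑ j, Real.exp (η * x j)) * y i := by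
    rw [hAdef, hS0]
    simp only [mul_zero, zero_mul, add_zero]
    rw [Finset.sum_div]
    exact Finset.sum_congr rfl fun i _ => by ring
  have := key
  rw [hψdef] at this
  simp only [one_pow, mul_one, one_mul] at this
  rw [hS1, hA0, hS0] at this
  nlinarith [this]
end

section
/- (Approximate (Φ,f)-Blackwell bound) Let (A, R) be a reward system with rewards in [0, U], Φ a finite set of action transformations, f : R^Φ → R_+^Φ a link function, and let L ∈ Δ(A) be a fixed point of M̃(q) = Σ_φ ỹ_φ [φ](q) / Σ_φ ỹ_φ where ỹ = f(R̃) for an estimate R̃ of the true cumulative regret R ∈ R^Φ (assuming Σ_φ ỹ_φ > 0). Then for any reward function r, f(R) · E_{a∼L}[ρ^Φ(a, r)] ≤ 2U ‖f(R) − f(R̃)‖_1. -/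
/-!
Write `ρ_i = E_{a∼L}[ρ^{φ_i}(a, r)]`. Each `ρ_i` is `r · ([φ_i](L) − L)`, so the fixed-point
equation `Σ_i ỹ_i [φ_i](L) = (Σ_i ỹ_i) L` gives `Σ_i ỹ_i ρ_i = 0`. Hence
`f(R) · ρ = (f(R) − ỹ) · ρ`, and `|ρ_i| ≤ U` because `ρ_i` averages differences of two
values in `[0, U]`.
-/

open Finset Matrix

section ExpectedRegret

variable {A : Type*} [Fintype A]

/-- `E_{a∼L}[ρ^φ(a, r)]`, for `φ` given as a row-stochastic matrix. -/
def expectedRegret (φ : Matrix A A ℝ) (L r : A → ℝ) : ℝ :=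
  ∑ a, L a * (φ a ⬝ᵥ r - r a)

theorem expectedRegret_eq_dotProduct (φ : Matrix A A ℝ) (L r : A → ℝ) :
    expectedRegret φ L r = (L ᵥ* φ - L) ⬝ᵥ r := by
  simp only [expectedRegret, mul_sub, sum_sub_distrib, sub_dotProduct, ← dotProduct_mulVec]
  rfl

theorem dotProduct_mem_Icc_of_mem_stdSimplex {p r : A → ℝ} {U : ℝ}
    (hp : p ∈ stdSimplex ℝ A) (hr : ∀ a, r a ∈ Set.Icc 0 U) : p ⬝ᵥ r ∈ Set.Icc 0 U := by
  refine ⟨sum_nonneg fun a _ => mul_nonneg (hp.1 a) (hr a).1, ?_⟩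
  calc p ⬝ᵥ r ≤ ∑ a, p a * U := sum_le_sum fun a _ => mul_le_mul_of_nonneg_left (hr a).2 (hp.1 a)
    _ = U := by rw [← sum_mul, hp.2, one_mul]

theorem abs_sum_mul_le_of_mem_stdSimplex {L g : A → ℝ} {U : ℝ}
    (hL : L ∈ stdSimplex ℝ A) (hg : ∀ a, |g a| ≤ U) : |∑ a, L a * g a| ≤ U :=
  calc |∑ a, L a * g a| ≤ ∑ a, L a * U := by
        refine (abs_sum_le_sum_abs _ _).trans (sum_le_sum fun a _ => ?_)
        rw [abs_mul, abs_of_nonneg (hL.1 a)]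
        exact mul_le_mul_of_nonneg_left (hg a) (hL.1 a)
    _ = U := by rw [← sum_mul, hL.2, one_mul]

theorem abs_expectedRegret_le {φ : Matrix A A ℝ} {L r : A → ℝ} {U : ℝ}
    (hφ : ∀ a, φ a ∈ stdSimplex ℝ A) (hL : L ∈ stdSimplex ℝ A)
    (hr : ∀ a, r a ∈ Set.Icc 0 U) : |expectedRegret φ L r| ≤ U := by
  refine abs_sum_mul_le_of_mem_stdSimplex hL fun a => ?_
  obtain ⟨hφr₀, hφrU⟩ := dotProduct_mem_Icc_of_mem_stdSimplex (hφ a) hr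
  exact abs_sub_le_of_nonneg_of_le hφr₀ hφrU (hr a).1 (hr a).2

theorem sum_mul_expectedRegret_eq_zero {ι : Type*} [Fintype ι] {φ : ι → Matrix A A ℝ}
    {w : ι → ℝ} {L : A → ℝ} (hfix : ∀ a, ∑ i, w i * (L ᵥ* φ i) a = (∑ i, w i) * L a)
    (r : A → ℝ) : ∑ i, w i * expectedRegret (φ i) L r = 0 := by
  have hbalance : ∑ i, w i • (L ᵥ* φ i - L) = 0 := by
    ext a
    simp only [Finset.sum_apply, Pi.smul_apply, Pi.sub_apply, smul_eq_mul, mul_sub,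
      sum_sub_distrib, hfix, ← sum_mul, Pi.zero_apply, sub_self]
  simp only [expectedRegret_eq_dotProduct, ← smul_eq_mul, ← smul_dotProduct, ← sum_dotProduct,
    hbalance, zero_dotProduct]

end ExpectedRegret

theorem sum_mul_le_of_sum_mul_eq_zero {ι : Type*} [Fintype ι] {w w' g : ι → ℝ} {U : ℝ}
    (hw' : ∑ i, w' i * g i = 0) (hg : ∀ i, |g i| ≤ U) :
    ∑ i, w i * g i ≤ U * ∑ i, |w i - w' i| :=
  calc ∑ i, w i * g i = ∑ i, (w i - w' i) * g i := by
        simp only [sub_mul, sum_sub_distrib, hw', sub_zero]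
    _ ≤ ∑ i, |w i - w' i| * U := sum_le_sum fun i _ => (le_abs_self _).trans <| by
        rw [abs_mul]
        exact mul_le_mul_of_nonneg_left (hg i) (abs_nonneg _)
    _ = U * ∑ i, |w i - w' i| := by rw [← sum_mul, mul_comm]

theorem approx_blackwell_bound_general
    {A ι : Type*} [Fintype A] [Fintype ι]
    (U : ℝ) (hU : 0 ≤ U)
    (φ : ι → A → A → ℝ) (hφ : ∀ i a, φ i a ∈ stdSimplex ℝ A)
    (f : (ι → ℝ) → ι → ℝ)
    (R Rtil : ι → ℝ)
    (hden : 0 < ∑ i, f Rtil i)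
    (L : A → ℝ) (hL : L ∈ stdSimplex ℝ A)
    (hfix : ∀ a, (∑ i, f Rtil i * (∑ b, L b * φ i b a)) / (∑ i, f Rtil i) = L a)
    (r : A → ℝ) (hr : ∀ a, r a ∈ Set.Icc 0 U) :
    ∑ i, f R i * (∑ a, L a * ((∑ s, φ i a s * r s) - r a)) ≤
      2 * U * ∑ i, |f R i - f Rtil i| := by
  have hfix' : ∀ a, ∑ i, f Rtil i * (L ᵥ* φ i) a = (∑ i, f Rtil i) * L a := fun a => by
    rw [mul_comm]
    exact (div_eq_iff hden.ne').mp (hfix a)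
  have hbalance := sum_mul_expectedRegret_eq_zero hfix' r
  have hregret : ∀ i, |expectedRegret (φ i) L r| ≤ U := fun i => abs_expectedRegret_le (hφ i) hL hr
  have hdist : 0 ≤ U * ∑ i, |f R i - f Rtil i| :=
    mul_nonneg hU (sum_nonneg fun i _ => abs_nonneg _)
  calc ∑ i, f R i * expectedRegret (φ i) L r ≤ U * ∑ i, |f R i - f Rtil i| :=
        sum_mul_le_of_sum_mul_eq_zero hbalance hregret
    _ ≤ 2 * U * ∑ i, |f R i - f Rtil i| := by linarith

/-- Approximate (Φ,f)-Blackwell bound: if `L` is a fixed point of the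
matrix built from `ỹ = f(R̃)` (with `Σ ỹ > 0`), rewards lie in `[0,U]`, then
`f(R) · E_{a∼L}[ρ^Φ(a,r)] ≤ 2U ‖f(R) − f(R̃)‖₁`. -/
theorem approx_blackwell_bound
    {A ι : Type*} [Fintype A] [Fintype ι]
    (U : ℝ) (hU : 0 ≤ U)
    (φ : ι → A → A → ℝ) (hφ : ∀ i a, φ i a ∈ stdSimplex ℝ A)
    (f : (ι → ℝ) → ι → ℝ) (hf : ∀ v i, 0 ≤ f v i)
    (R Rtil : ι → ℝ)
    (hden : 0 < ∑ i, f Rtil i)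
    (L : A → ℝ) (hL : L ∈ stdSimplex ℝ A)
    (hfix : ∀ a, (∑ i, f Rtil i * (∑ b, L b * φ i b a)) / (∑ i, f Rtil i) = L a)
    (r : A → ℝ) (hr : ∀ a, r a ∈ Set.Icc 0 U) :
    ∑ i, f R i * (∑ a, L a * ((∑ s, φ i a s * r s) - r a)) ≤
      2 * U * ∑ i, |f R i - f Rtil i| :=
  approx_blackwell_bound_general U hU φ hφ f R Rtil hden L hL hfix r hr
end

section
/- (Exact Blackwell condition) In the setting of the approximate (Φ,f)-Blackwell bound, if the estimates are exact (R̃ = R), so that L is a fixed point of M(q) = Σ_φ f(R)_φ [φ](q) / Σ_φ f(R)_φ, then f(R) · E_{a∼L}[ρ^Φ(a,r)] = 0 for every reward function r. -/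
/-!
Exchanging the order of summation turns the `f(R)`-weighted expected regret into
`⟨L M, r⟩ - (Σ f(R)) ⟨L, r⟩`, where `M = Σ_φ f(R)_φ [φ]` is the unnormalized mixture of the
transformations. The fixed-point condition says exactly that `L M = (Σ f(R)) L`, so the two
terms cancel.
-/

open Finset

section

variable {R A ι : Type*} [CommRing R] [Fintype A] [Fintype ι]

theorem weighted_expected_regret_eq (w : ι → R) (φ : ι → A → A → R) (L r : A → R) :
    ∑ i, w i * ∑ a, L a * ((∑ s, φ i a s * r s) - r a)
      = ∑ s, (∑ i, w i * ∑ b, L b * φ i b s) * r s - (∑ i, w i) * ∑ a, L a * r a := by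
  simp only [mul_sub, mul_sum, sum_sub_distrib, sum_mul]
  congr 1
  · conv_lhs => enter [2, i]; rw [sum_comm]
    rw [sum_comm]
    exact sum_congr rfl fun s _ => sum_congr rfl fun i _ => sum_congr rfl fun a _ => by ring
  · exact sum_comm

theorem weighted_expected_regret_eq_zero_of_stationary (w : ι → R) (φ : ι → A → A → R)
    (L r : A → R) (hstat : ∀ s, ∑ i, w i * ∑ b, L b * φ i b s = (∑ i, w i) * L s) :
    ∑ i, w i * ∑ a, L a * ((∑ s, φ i a s * r s) - r a) = 0 := by
  simp only [weighted_expected_regret_eq, hstat, mul_assoc, ← mul_sum, sub_self]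

end

theorem exact_blackwell_condition_general
    {A ι : Type*} [Fintype A] [Fintype ι]
    (φ : ι → A → A → ℝ)
    (f : (ι → ℝ) → ι → ℝ)
    (R : ι → ℝ)
    (hden : 0 < ∑ i, f R i)
    (L : A → ℝ)
    (hfix : ∀ a, (∑ i, f R i * (∑ b, L b * φ i b a)) / (∑ i, f R i) = L a)
    (r : A → ℝ) :
    ∑ i, f R i * (∑ a, L a * ((∑ s, φ i a s * r s) - r a)) = 0 := by
  refine weighted_expected_regret_eq_zero_of_stationary _ φ L r fun s => ?_
  rw [← hfix s, mul_div_cancel₀ _ hden.ne']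

/-- Exact Blackwell condition: if the estimates are exact, i.e. `L`
is a fixed point of the matrix built from `f(R)` itself, then
`f(R) · E_{a∼L}[ρ^Φ(a,r)] = 0` for every reward function `r`. -/
theorem exact_blackwell_condition
    {A ι : Type*} [Fintype A] [Fintype ι]
    (U : ℝ) (hU : 0 ≤ U)
    (φ : ι → A → A → ℝ) (hφ : ∀ i a, φ i a ∈ stdSimplex ℝ A)
    (f : (ι → ℝ) → ι → ℝ) (hf : ∀ v i, 0 ≤ f v i)
    (R : ι → ℝ)
    (hden : 0 < ∑ i, f R i)
    (L : A → ℝ) (hL : L ∈ stdSimplex ℝ A)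
    (hfix : ∀ a, (∑ i, f R i * (∑ b, L b * φ i b a)) / (∑ i, f R i) = L a)
    (r : A → ℝ) (hr : ∀ a, r a ∈ Set.Icc 0 U) :
    ∑ i, f R i * (∑ a, L a * ((∑ s, φ i a s * r s) - r a)) = 0 :=
  exact_blackwell_condition_general φ f R hden L hfix r
end

section
/- (Polynomial link, 1 < p ≤ 2) An approximate (Φ, f)-regret-matching algorithm with polynomial link f(x)_i = (x_i⁺)^{p−1}, 1 < p ≤ 2, guarantees E[max_φ (1/t) R^φ_t] ≤ (1/t)·( tU^pμ(Φ) + 2U Σ_{k=1}^t ‖g(R^Φ_{k−1}) − g(R̃^Φ_{k−1})‖_1 )^{1/p}, where g(x)_i = p(x_i⁺)^{p−1}. -/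
open MeasureTheory Finset
open scoped Classical

set_option maxHeartbeats 1000000

open scoped NNReal

lemma aux_rpow_add_le {q : ℝ} (hq0 : 0 ≤ q) (hq1 : q ≤ 1) {x y : ℝ} (hx : 0 ≤ x) (hy : 0 ≤ y) :
    (x + y) ^ q ≤ x ^ q + y ^ q := by
  have h := NNReal.rpow_add_le_add_rpow x.toNNReal y.toNNReal hq0 hq1
  have h2 := NNReal.coe_le_coe.2 h
  simpa [NNReal.coe_rpow, Real.coe_toNNReal x hx, Real.coe_toNNReal y hy,
    ← Real.toNNReal_add hx hy, Real.coe_toNNReal _ (add_nonneg hx hy)] using h2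

lemma aux_continuous_rpow {q : ℝ} (hq : 0 < q) : Continuous (fun x : ℝ => x ^ q) := by
  rw [continuous_iff_continuousAt]
  exact fun x => Real.continuousAt_rpow_const x q (Or.inr hq.le)

lemma aux_young {p b s : ℝ} (hp1 : 1 < p) (hp2 : p ≤ 2) (hb : 0 ≤ b) (hs : 0 ≤ s) :
    p * b ^ (p - 1) * s ≤ b ^ p + s ^ p := by
  have hp0 : (0:ℝ) < p := by linarith
  have hcj : (p / (p - 1)).HolderConjugate p :=
    ((Real.holderConjugate_iff_eq_conjExponent hp1).2 rfl).symm
  have h := Real.young_inequality_of_nonneg (Real.rpow_nonneg hb (p - 1)) hs hcj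
  rw [← Real.rpow_mul hb, show (p - 1) * (p / (p - 1)) = p by rw [mul_comm, div_mul_cancel₀ _ (by linarith : p - 1 ≠ 0)],
    div_div_eq_mul_div] at h
  have hB : 0 ≤ b ^ p := Real.rpow_nonneg hb p
  have h3 := mul_le_mul_of_nonneg_left h hp0.le
  rw [mul_add, mul_div_cancel₀ _ hp0.ne', mul_comm p (s ^ p / p),
    div_mul_cancel₀ _ hp0.ne'] at h3
  nlinarith [h3, mul_nonneg hB (by linarith : (0:ℝ) ≤ 2 - p)]

lemma aux_zeta {p : ℝ} (hp1 : 1 < p) (hp2 : p ≤ 2) {b c : ℝ} (hb : 0 ≤ b) (hc : b ≤ c) :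
    c ^ p ≤ b ^ p + p * b ^ (p - 1) * (c - b) + (c - b) ^ p := by
  have hp0 : (0:ℝ) < p := by linarith
  set ζ : ℝ → ℝ := fun x => b ^ p + p * b ^ (p - 1) * (x - b) + (x - b) ^ p - x ^ p with hζ
  have h1 := aux_continuous_rpow hp0
  have hsubc : Continuous fun x : ℝ => x - b := continuous_id.sub continuous_const
  have hcont : Continuous ζ :=
    ((continuous_const.add (continuous_const.mul hsubc)).add (h1.comp hsubc)).sub h1
  have hderiv : ∀ x ∈ interior (Set.Ici b), HasDerivAt ζ
      (0 + p * b ^ (p - 1) * 1 + p * (x - b) ^ (p - 1) * 1 - p * x ^ (p - 1)) x := by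
    intro x hx
    rw [interior_Ici] at hx
    have hs : HasDerivAt (fun y : ℝ => y - b) 1 x := (hasDerivAt_id x).sub_const b
    have hxp : HasDerivAt (fun y : ℝ => y ^ p) (p * x ^ (p - 1)) x :=
      Real.hasDerivAt_rpow_const (Or.inr hp1.le)
    have hxbp : HasDerivAt (fun y : ℝ => (y - b) ^ p) (p * (x - b) ^ (p - 1) * 1) x :=
      HasDerivAt.comp (h := fun y : ℝ => y - b) x
        (Real.hasDerivAt_rpow_const (x := x - b) (p := p) (Or.inr hp1.le)) hs
    exact (((hasDerivAt_const x (b ^ p)).add (hs.const_mul _)).add hxbp).sub hxp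
  have hmono : MonotoneOn ζ (Set.Ici b) := by
    refine monotoneOn_of_deriv_nonneg (convex_Ici b) hcont.continuousOn
      (fun x hx => (hderiv x hx).differentiableAt.differentiableWithinAt) ?_
    intro x hx
    rw [(hderiv x hx).deriv]
    rw [interior_Ici] at hx
    have hsub := aux_rpow_add_le (by linarith : (0:ℝ) ≤ p - 1) (by linarith) hb
      (by linarith [hx.out] : (0:ℝ) ≤ x - b)
    have : b + (x - b) = x := by ring
    rw [this] at hsub
    nlinarith [hsub]
  have h := hmono (Set.self_mem_Ici) (by exact hc) hc
  have hζb : ζ b = 0 := by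
    simp [hζ, Real.zero_rpow hp0.ne']
  rw [hζb] at h
  simp only [hζ] at h
  linarith

lemma aux_eta {p : ℝ} (hp1 : 1 < p) (hp2 : p ≤ 2) {b c : ℝ} (hc : 0 ≤ c) (hcb : c ≤ b) :
    c ^ p ≤ b ^ p + p * b ^ (p - 1) * (c - b) + (b - c) ^ p := by
  have hp0 : (0:ℝ) < p := by linarith
  have hb : 0 ≤ b := hc.trans hcb
  set η : ℝ → ℝ := fun x => b ^ p + p * b ^ (p - 1) * (x - b) + (b - x) ^ p - x ^ p with hη
  have h1 := aux_continuous_rpow hp0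
  have hsubc : Continuous fun x : ℝ => x - b := continuous_id.sub continuous_const
  have hsubc2 : Continuous fun x : ℝ => b - x := continuous_const.sub continuous_id
  have hcont : Continuous η :=
    ((continuous_const.add (continuous_const.mul hsubc)).add (h1.comp hsubc2)).sub h1
  have hderiv : ∀ x ∈ interior (Set.Icc 0 b), HasDerivAt η
      (0 + p * b ^ (p - 1) * 1 + p * (b - x) ^ (p - 1) * (-1) - p * x ^ (p - 1)) x := by
    intro x hx
    have hs : HasDerivAt (fun y : ℝ => y - b) 1 x := (hasDerivAt_id x).sub_const b
    have hs2 : HasDerivAt (fun y : ℝ => b - y) (-1) x := (hasDerivAt_id x).const_sub b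
    have hxp : HasDerivAt (fun y : ℝ => y ^ p) (p * x ^ (p - 1)) x :=
      Real.hasDerivAt_rpow_const (Or.inr hp1.le)
    have hxbp : HasDerivAt (fun y : ℝ => (b - y) ^ p) (p * (b - x) ^ (p - 1) * (-1)) x :=
      (Real.hasDerivAt_rpow_const (x := b - x) (p := p) (Or.inr hp1.le)).comp x hs2
    exact (((hasDerivAt_const x (b ^ p)).add (hs.const_mul _)).add hxbp).sub hxp
  have hanti : AntitoneOn η (Set.Icc 0 b) := by
    refine antitoneOn_of_deriv_nonpos (convex_Icc 0 b) hcont.continuousOn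
      (fun x hx => (hderiv x hx).differentiableAt.differentiableWithinAt) ?_
    intro x hx
    rw [(hderiv x hx).deriv]
    rw [interior_Icc] at hx
    obtain ⟨hx0, hxb⟩ := hx
    have hsub := aux_rpow_add_le (by linarith : (0:ℝ) ≤ p - 1) (by linarith)
      (by linarith : (0:ℝ) ≤ b - x) hx0.le
    have : b - x + x = b := by ring
    rw [this] at hsub
    nlinarith [hsub]
  have h := hanti (Set.mem_Icc.2 ⟨hc, hcb⟩) (Set.mem_Icc.2 ⟨hb, le_rfl⟩) hcb
  have hηb : η b = 0 := by
    simp [hη, Real.zero_rpow hp0.ne']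
  rw [hηb] at h
  simp only [hη] at h
  linarith

lemma aux_smooth {p : ℝ} (hp1 : 1 < p) (hp2 : p ≤ 2) (b d : ℝ) :
    max (b + d) 0 ^ p ≤ max b 0 ^ p + p * max b 0 ^ (p - 1) * d + |d| ^ p := by
  have hp0 : (0:ℝ) < p := by linarith
  rcases le_or_gt b 0 with hb | hb
  · rw [max_eq_right hb, Real.zero_rpow hp0.ne', Real.zero_rpow (by linarith : p - 1 ≠ 0)]
    have h1 : max (b + d) 0 ≤ |d| := by
      rcases le_or_gt (b + d) 0 with h | h
      · rw [max_eq_right h]; exact abs_nonneg d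
      · rw [max_eq_left h.le]; calc b + d ≤ d := by linarith
          _ ≤ |d| := le_abs_self d
    calc max (b + d) 0 ^ p ≤ |d| ^ p :=
          Real.rpow_le_rpow (le_max_right _ _) h1 hp0.le
      _ = 0 + p * 0 * d + |d| ^ p := by ring
  · rw [max_eq_left hb.le]
    rcases le_or_gt (b + d) 0 with hbd | hbd
    · rw [max_eq_right hbd]
      rw [Real.zero_rpow hp0.ne']
      have hd : d ≤ 0 := by linarith
      have habs : |d| = -d := abs_of_nonpos hd
      rw [habs]
      have := aux_young hp1 hp2 hb.le (by linarith : (0:ℝ) ≤ -d)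
      nlinarith [this]
    · rw [max_eq_left hbd.le]
      rcases le_or_gt 0 d with hd | hd
      · have := aux_zeta hp1 hp2 hb.le (by linarith : b ≤ b + d)
        simp only [add_sub_cancel_left] at this
        rw [abs_of_nonneg hd]
        convert this using 3 <;> ring
      · have := aux_eta (b := b) (c := b + d) hp1 hp2 hbd.le (by linarith)
        simp only [add_sub_cancel_left] at this
        rw [abs_of_neg hd]
        convert this using 3 <;> ring

lemma aux_pick {A : Type*} [Fintype A] [DecidableEq A] (a0 : A) (H : A → ℝ) :
    H a0 = ∑ a, (if a0 = a then (1:ℝ) else 0) * H a := by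
  simp [ite_mul, Finset.sum_ite_eq]

lemma aux_fixed_point {A ι : Type*} [Fintype A] [Fintype ι] (p c : ℝ)
    (F : ι → ℝ) (l r : A → ℝ) (φ : ι → A → A → ℝ)
    (hc : c = ∑ i, F i)
    (hfx : ∀ s, ∑ i, F i * (∑ b, l b * φ i b s) = l s * c) :
    ∑ a, (∑ i, (p * F i) * ((∑ s, φ i a s * r s) - r a)) * l a = 0 := by
  have hterm : ∀ a i, p * F i * ((∑ s, φ i a s * r s) - r a) * l a
      = (∑ s, p * (F i * (l a * φ i a s) * r s)) - p * (F i * (r a * l a)) := by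
    intro a i
    calc p * F i * ((∑ s, φ i a s * r s) - r a) * l a
        = (∑ s, p * F i * (φ i a s * r s)) * l a - p * F i * r a * l a := by
          rw [mul_sub, sub_mul, Finset.mul_sum]
      _ = (∑ s, p * F i * (φ i a s * r s) * l a) - p * F i * r a * l a := by
          rw [Finset.sum_mul]
      _ = (∑ s, p * (F i * (l a * φ i a s) * r s)) - p * (F i * (r a * l a)) := by
          congr 1
          · exact Finset.sum_congr rfl fun s _ => by ring
          · ring
  have h1 : ∀ a, (∑ i, (p * F i) * ((∑ s, φ i a s * r s) - r a)) * l a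
      = (∑ i, ∑ s, p * (F i * (l a * φ i a s) * r s)) - ∑ i, p * (F i * (r a * l a)) := by
    intro a
    rw [Finset.sum_mul, ← Finset.sum_sub_distrib]
    exact Finset.sum_congr rfl fun i _ => hterm a i
  calc ∑ a, (∑ i, (p * F i) * ((∑ s, φ i a s * r s) - r a)) * l a
      = (∑ a, ∑ i, ∑ s, p * (F i * (l a * φ i a s) * r s))
        - ∑ a, ∑ i, p * (F i * (r a * l a)) := by
        rw [← Finset.sum_sub_distrib]
        exact Finset.sum_congr rfl fun a _ => h1 a
    _ = (∑ s, ∑ i, ∑ a, p * (F i * (l a * φ i a s) * r s))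
        - ∑ i, ∑ a, p * (F i * (r a * l a)) := by
        congr 1
        · calc ∑ a, ∑ i, ∑ s, p * (F i * (l a * φ i a s) * r s)
              = ∑ a, ∑ s, ∑ i, p * (F i * (l a * φ i a s) * r s) :=
                Finset.sum_congr rfl fun a _ => Finset.sum_comm
            _ = ∑ s, ∑ a, ∑ i, p * (F i * (l a * φ i a s) * r s) := Finset.sum_comm
            _ = ∑ s, ∑ i, ∑ a, p * (F i * (l a * φ i a s) * r s) :=
                Finset.sum_congr rfl fun s _ => Finset.sum_comm
        · exact Finset.sum_comm
    _ = (∑ s, p * ((l s * c) * r s)) - p * ((∑ a, l a * r a) * c) := by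
        congr 1
        · refine Finset.sum_congr rfl fun s _ => ?_
          have h2 : ∑ i, ∑ a, p * (F i * (l a * φ i a s) * r s)
              = p * ((∑ i, F i * (∑ b, l b * φ i b s)) * r s) := by
            conv_rhs => rw [Finset.sum_mul, Finset.mul_sum]
            refine Finset.sum_congr rfl fun i _ => ?_
            rw [Finset.mul_sum, Finset.sum_mul, Finset.mul_sum]
          rw [h2, hfx s]
        · rw [hc]
          have h3 : ∀ i : ι, ∑ a, p * (F i * (r a * l a)) = p * (F i * ∑ a, r a * l a) := by
            intro i; rw [← Finset.mul_sum, ← Finset.mul_sum]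
          rw [Finset.sum_congr rfl fun i (_ : i ∈ univ) => h3 i, ← Finset.mul_sum,
            ← Finset.sum_mul]
          have h4 : ∑ a, r a * l a = ∑ a, l a * r a :=
            Finset.sum_congr rfl fun a _ => mul_comm _ _
          rw [h4]; ring
    _ = 0 := by
        have h5 : ∑ s, p * ((l s * c) * r s) = p * ((∑ s, l s * r s) * c) := by
          rw [← Finset.mul_sum, Finset.sum_mul]
          exact congrArg (p * ·) (Finset.sum_congr rfl fun s _ => by ring).symm
        rw [h5]; ring


lemma aux_act_meas {A Ω : Type*} [Fintype A] [DecidableEq A] [mΩ : MeasurableSpace Ω]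
    (μ : Measure Ω) [IsProbabilityMeasure μ] {m : MeasurableSpace Ω} (hm : m ≤ mΩ)
    (act : Ω → A) (L : Ω → A → ℝ) (hLsimplex : ∀ ω, L ω ∈ stdSimplex ℝ A)
    (hcond : ∀ F : A → ℝ, ∀ᵐ ω ∂μ, (μ[(fun ω' => F (act ω')) | m]) ω = ∑ b, L ω b * F b) :
    ∀ a, AEStronglyMeasurable[mΩ] (fun ω => (if act ω = a then (1:ℝ) else 0)) μ := by
  set ind : A → Ω → ℝ := fun a ω => if act ω = a then (1:ℝ) else 0 with hind
  set S : Finset A := univ.filter (fun a => AEStronglyMeasurable[mΩ] (ind a) μ) with hS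
  have hSmem : ∀ a, a ∈ S ↔ AEStronglyMeasurable[mΩ] (ind a) μ := by
    intro a; simp [hS]
  have hint : ∀ a ∈ S, Integrable (ind a) μ := by
    intro a ha
    refine (integrable_const (1:ℝ)).mono' ((hSmem a).1 ha) (ae_of_all _ fun ω => ?_)
    simp only [hind]
    split <;> simp
  -- condexp of ind a for a ∈ S is L · a
  have hcondS : ∀ a, ∀ᵐ ω ∂μ, (μ[ind a | m]) ω = L ω a := by
    intro a
    filter_upwards [hcond (fun b => if b = a then (1:ℝ) else 0)] with ω hω
    simpa [mul_ite, Finset.sum_ite_eq'] using hω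
  -- for a ∉ S, L · a = 0 a.e.
  have hLzero : ∀ a, a ∉ S → ∀ᵐ ω ∂μ, L ω a = 0 := by
    intro a ha
    have hni : ¬ Integrable (ind a) μ := fun h => ha ((hSmem a).2 h.aestronglyMeasurable)
    have h0 : μ[ind a | m] = 0 := condExp_of_not_integrable hni
    filter_upwards [hcondS a] with ω hω
    rw [← hω, h0]; rfl
  set gS : Ω → ℝ := fun ω => ∑ a ∈ S, ind a ω with hgS
  have hgS_eq : ∀ ω, gS ω = if act ω ∈ S then (1:ℝ) else 0 := by
    intro ω
    simp only [hgS, hind, Finset.sum_ite_eq]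
  have hgS_int : Integrable gS μ := integrable_finset_sum S hint
  have hgS_cond : μ[gS | m] =ᵐ[μ] fun ω => ∑ a ∈ S, L ω a := by
    have hfun : gS = ∑ a ∈ S, ind a := by
      funext ω; rw [Finset.sum_apply]
    have h1 : μ[gS | m] =ᵐ[μ] ∑ a ∈ S, μ[ind a | m] := by
      rw [hfun]; exact condExp_finsetSum hint m
    have h2 : ∀ᵐ ω ∂μ, ∀ a ∈ S, (μ[ind a | m]) ω = L ω a := by
      rw [ae_all_iff]
      intro a
      rcases Classical.em (a ∈ S) with h | h
      · filter_upwards [hcondS a] with ω hω _; exact hω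
      · filter_upwards with ω hc; exact absurd hc h
    filter_upwards [h1, h2] with ω h1 h2
    rw [h1]
    simp only [Finset.sum_apply]
    exact Finset.sum_congr rfl h2
  have hSsum : ∀ᵐ ω ∂μ, ∑ a ∈ S, L ω a = 1 := by
    have hz : ∀ᵐ ω ∂μ, ∀ a, a ∉ S → L ω a = 0 := by
      rw [ae_all_iff]
      intro a
      rcases Classical.em (a ∈ S) with h | h
      · filter_upwards with ω hc; exact absurd h hc
      · filter_upwards [hLzero a h] with ω hω _; exact hω
    filter_upwards [hz] with ω hz
    have := Finset.sum_subset (Finset.subset_univ S) (fun x _ hx => hz x hx)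
    rw [this, (hLsimplex ω).2]
  have hIgS : ∫ ω, gS ω ∂μ = 1 := by
    rw [← integral_condExp hm (f := gS)]
    rw [integral_congr_ae hgS_cond, integral_congr_ae hSsum]
    simp
  have hone : (fun ω => 1 - gS ω) =ᵐ[μ] 0 := by
    rw [← integral_eq_zero_iff_of_nonneg]
    · rw [integral_sub (integrable_const 1) hgS_int, hIgS]; simp
    · intro ω
      simp only [Pi.zero_apply, hgS_eq ω, sub_nonneg]
      split <;> norm_num
    · exact (integrable_const 1).sub hgS_int
  intro a
  rcases Classical.em (a ∈ S) with h | h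
  · exact (hSmem a).1 h
  · have : ind a =ᵐ[μ] 0 := by
      filter_upwards [hone] with ω hω
      simp only [Pi.zero_apply] at hω
      have hgS1 : gS ω = 1 := by linarith
      rw [hgS_eq ω] at hgS1
      have hmem : act ω ∈ S := by by_contra hc; simp [hc] at hgS1
      have : act ω ≠ a := fun he => h (he ▸ hmem)
      simp [hind, this]
    exact aestronglyMeasurable_const.congr this.symm

lemma aux_integral_act {A Ω : Type*} [Fintype A] [DecidableEq A] [mΩ : MeasurableSpace Ω]
    (μ : Measure Ω) [IsProbabilityMeasure μ] {m : MeasurableSpace Ω} (hm : m ≤ mΩ)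
    (act : Ω → A) (L : Ω → A → ℝ) (hL : ∀ ω, L ω ∈ stdSimplex ℝ A)
    (hcond : ∀ F : A → ℝ, ∀ᵐ ω ∂μ, (μ[(fun ω' => F (act ω')) | m]) ω = ∑ b, L ω b * F b)
    (X : A → Ω → ℝ) (hX : ∀ a, StronglyMeasurable[m] (X a)) (hXi : ∀ a, Integrable (X a) μ) :
    ∫ ω, X (act ω) ω ∂μ = ∫ ω, ∑ a, X a ω * L ω a ∂μ := by
  have hact := aux_act_meas (mΩ := mΩ) μ hm act L hL hcond
  set ind : A → Ω → ℝ := fun a ω => if act ω = a then (1:ℝ) else 0 with hind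
  have hind_bd : ∀ a ω, |ind a ω| ≤ 1 := by
    intro a ω; simp only [hind]; split <;> norm_num
  have hind_int : ∀ a, Integrable (ind a) μ :=
    fun a => (integrable_const (1:ℝ)).mono' (hact a)
      (ae_of_all _ fun ω => by rw [Real.norm_eq_abs]; exact hind_bd a ω)
  have hcondS : ∀ a, ∀ᵐ ω ∂μ, (μ[ind a | m]) ω = L ω a := by
    intro a
    filter_upwards [hcond (fun b => if b = a then (1:ℝ) else 0)] with ω hω
    simpa [mul_ite, Finset.sum_ite_eq'] using hω
  have hL_bd : ∀ a ω, |L ω a| ≤ 1 := by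
    intro a ω
    rw [abs_of_nonneg ((hL ω).1 a)]
    calc L ω a ≤ ∑ b, L ω b := Finset.single_le_sum (fun b _ => (hL ω).1 b) (mem_univ a)
      _ = 1 := (hL ω).2
  have h1 : ∀ ω, X (act ω) ω = ∑ a, X a ω * ind a ω := by
    intro ω
    simp only [hind, mul_ite, mul_one, mul_zero]
    rw [Finset.sum_congr rfl (fun a _ => by rw [show (if act ω = a then X a ω else 0)
      = (if act ω = a then X (act ω) ω else 0) by split <;> simp_all])]
    simp [Finset.sum_ite_eq]
  have hXind_int : ∀ a, Integrable (X a * ind a) μ := by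
    intro a
    refine (hXi a).abs.mono' (((hX a).mono hm).aestronglyMeasurable.mul (hact a))
      (ae_of_all _ fun ω => ?_)
    rw [Pi.mul_apply, Real.norm_eq_abs, abs_mul]
    calc |X a ω| * |ind a ω| ≤ |X a ω| * 1 :=
        mul_le_mul_of_nonneg_left (hind_bd a ω) (abs_nonneg _)
      _ = |X a ω| := mul_one _
  have step1 : ∫ ω, X (act ω) ω ∂μ = ∑ a, ∫ ω, X a ω * ind a ω ∂μ := by
    rw [show (fun ω => X (act ω) ω) = fun ω => ∑ a, X a ω * ind a ω from funext h1]
    exact integral_finset_sum univ fun a _ => hXind_int a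
  have step2 : ∀ a, ∫ ω, X a ω * ind a ω ∂μ = ∫ ω, X a ω * L ω a ∂μ := by
    intro a
    have hpull : μ[X a * ind a | m] =ᵐ[μ] X a * μ[ind a | m] :=
      condExp_mul_of_stronglyMeasurable_left (hX a) (hXind_int a) (hind_int a)
    calc ∫ ω, X a ω * ind a ω ∂μ = ∫ ω, (μ[X a * ind a | m]) ω ∂μ :=
          (integral_condExp hm).symm
      _ = ∫ ω, X a ω * (μ[ind a | m]) ω ∂μ := integral_congr_ae hpull
      _ = ∫ ω, X a ω * L ω a ∂μ := by
          refine integral_congr_ae ?_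
          filter_upwards [hcondS a] with ω hω
          rw [hω]
  have hXL_int : ∀ a, Integrable (fun ω => X a ω * L ω a) μ := by
    intro a
    have hLm : AEStronglyMeasurable[mΩ] (fun ω => L ω a) μ :=
      ((stronglyMeasurable_condExp.mono hm).aestronglyMeasurable).congr (hcondS a)
    refine (hXi a).abs.mono' (((hX a).mono hm).aestronglyMeasurable.mul hLm)
      (ae_of_all _ fun ω => ?_)
    rw [Real.norm_eq_abs, abs_mul]
    calc |X a ω| * |L ω a| ≤ |X a ω| * 1 :=
        mul_le_mul_of_nonneg_left (hL_bd a ω) (abs_nonneg _)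
      _ = |X a ω| := mul_one _
  rw [step1, Finset.sum_congr rfl (fun a _ => step2 a),
    ← integral_finset_sum univ fun a _ => hXL_int a]

/-- Polynomial link, 1 < p ≤ 2: an approximate `(Φ, f)`-regret-matching
algorithm with polynomial link `f(x)_i = (x_i⁺)^{p−1}`, `1 < p ≤ 2`, guarantees
`E[max_φ (1/t) R^φ_t] ≤ (1/t)·( tU^pμ(Φ) + 2U Σ_k E‖g(R_{k−1}) − g(R̃_{k−1})‖₁ )^{1/p}`,
where `g(x)_i = p(x_i⁺)^{p−1}`. -/
theorem approx_regret_matching_poly_link_p_le_two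
    {A ι Ω : Type*} [Fintype A] [DecidableEq A] [Fintype ι] [Nonempty ι]
    [MeasurableSpace Ω] (μ : Measure Ω) [IsProbabilityMeasure μ]
    (U p : ℝ) (hU : 0 ≤ U) (hp1 : 1 < p) (hp2 : p ≤ 2)
    (φ : ι → A → A → ℝ) (hφ : ∀ i a, φ i a ∈ stdSimplex ℝ A)
    -- the polynomial link f and the normalized link g
    (f : (ι → ℝ) → ι → ℝ)
    (hf : ∀ v i, f v i = (max (v i) 0) ^ (p - 1))
    (g : (ι → ℝ) → ι → ℝ)
    (hg : ∀ v i, g v i = p * (max (v i) 0) ^ (p - 1))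
    -- maximal activation μ(Φ)
    (μΦ : ℕ)
    (hμΦ : μΦ = Finset.univ.sup (fun a : A =>
      (Finset.univ.filter (fun i : ι =>
        φ i a ≠ fun b => if b = a then 1 else 0)).card))
    -- regret
    (ρ : ι → A → (A → ℝ) → ℝ)
    (hρ : ∀ i a r, ρ i a r = (∑ s, φ i a s * r s) - r a)
    -- the stochastic process: actions, rewards, cumulative regrets, estimates, strategies
    (act : ℕ → Ω → A) (rew : ℕ → Ω → A → ℝ)
    (hrew : ∀ t ω a, rew t ω a ∈ Set.Icc 0 U)
    (Rcum : ℕ → Ω → ι → ℝ)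
    (hR : ∀ t ω i, Rcum t ω i = ∑ s ∈ Finset.Icc 1 t, ρ i (act s ω) (rew s ω))
    (Rtil : ℕ → Ω → ι → ℝ)
    (L : ℕ → Ω → A → ℝ)
    (hLsimplex : ∀ t ω, L t ω ∈ stdSimplex ℝ A)
    -- the algorithm plays the fixed point of the matrix built from f(R̃_{t-1})
    (hden : ∀ t : ℕ, 1 ≤ t → ∀ ω, 0 < ∑ i, f (Rtil (t - 1) ω) i)
    (hfix : ∀ t : ℕ, 1 ≤ t → ∀ ω a,
      (∑ i, f (Rtil (t - 1) ω) i * (∑ b, L t ω b * φ i b a)) /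
        (∑ i, f (Rtil (t - 1) ω) i) = L t ω a)
    -- history filtration; estimates, strategy and round-t rewards are history-measurable
    (m : ℕ → MeasurableSpace Ω)
    (hm : ∀ t, m t ≤ ‹MeasurableSpace Ω›)
    (hmono : Monotone m)
    (hRtil_meas : ∀ t : ℕ, 1 ≤ t → Measurable[m (t - 1)] (Rtil (t - 1)))
    (hL_meas : ∀ t : ℕ, 1 ≤ t → Measurable[m (t - 1)] (L t))
    (hrew_meas : ∀ t : ℕ, 1 ≤ t → Measurable[m (t - 1)] (rew t))
    -- the action a_t is sampled from L_t conditionally on the history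
    (hcond : ∀ t : ℕ, 1 ≤ t → ∀ F : A → ℝ, ∀ᵐ ω ∂μ,
      (μ[(fun ω' => F (act t ω')) | m (t - 1)]) ω = ∑ b, L t ω b * F b)
    -- integrability
    (hintmax : ∀ t, Integrable
      (fun ω => Finset.univ.sup' Finset.univ_nonempty (Rcum t ω)) μ)
    (hinterr : ∀ t, Integrable
      (fun ω => ∑ i, |g (Rcum t ω) i - g (Rtil t ω) i|) μ)
    (t : ℕ) (ht : 1 ≤ t) :
    ∫ ω, (Finset.univ.sup' Finset.univ_nonempty (Rcum t ω)) / t ∂μ ≤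
      (1 / (t : ℝ)) * (
        (t : ℝ) * U ^ p * (μΦ : ℝ) +
        2 * U * ∑ k ∈ Finset.Icc 1 t,
          ∫ ω, ∑ i, |g (Rcum (k - 1) ω) i - g (Rtil (k - 1) ω) i| ∂μ) ^ (1 / p) := by
  classical
  have hp0 : (0:ℝ) < p := by linarith
  have hq0 : (0:ℝ) < p - 1 := by linarith
  have hcmax : Continuous (fun x : ℝ => max x 0) := continuous_id.max continuous_const
  have hc1 : Continuous (fun x : ℝ => (max x 0) ^ (p - 1)) :=
    (aux_continuous_rpow hq0).comp hcmax
  have hc1' : Continuous (fun x : ℝ => p * (max x 0) ^ (p - 1)) := continuous_const.mul hc1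
  have hcp : Continuous (fun x : ℝ => (max x 0) ^ p) := (aux_continuous_rpow hp0).comp hcmax
  -- ambient measurability of rew and Rtil
  have hrewM : ∀ K, 1 ≤ K → Measurable (rew K) :=
    fun K hK => (hrew_meas K hK).mono (hm _) le_rfl
  -- bounds on ρ
  have hρ_bound : ∀ (a : A) (r : A → ℝ), (∀ s, r s ∈ Set.Icc (0:ℝ) U) →
      ∀ i, |ρ i a r| ≤ U := by
    intro a r hr i
    rw [hρ]
    have h1 : 0 ≤ ∑ s, φ i a s * r s :=
      Finset.sum_nonneg fun s _ => mul_nonneg ((hφ i a).1 s) (hr s).1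
    have h2 : ∑ s, φ i a s * r s ≤ U := by
      calc ∑ s, φ i a s * r s ≤ ∑ s, φ i a s * U :=
            Finset.sum_le_sum fun s _ => mul_le_mul_of_nonneg_left (hr s).2 ((hφ i a).1 s)
        _ = U := by rw [← Finset.sum_mul, (hφ i a).2, one_mul]
    have h3 := (hr a).1
    have h4 := (hr a).2
    rw [abs_le]; constructor <;> linarith
  have hρ_zero : ∀ (a : A) (r : A → ℝ) (i : ι),
      φ i a = (fun b => if b = a then (1:ℝ) else 0) → ρ i a r = 0 := by
    intro a r i h
    rw [hρ, h]
    simp [ite_mul, Finset.sum_ite_eq']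
  -- recursion for Rcum
  have hRrec : ∀ k ω i, Rcum (k+1) ω i = Rcum k ω i + ρ i (act (k+1) ω) (rew (k+1) ω) := by
    intro k ω i
    rw [hR, hR, Finset.sum_Icc_succ_top (Nat.le_add_left 1 k)]
  have hRbound : ∀ k ω i, |Rcum k ω i| ≤ k * U := by
    intro k ω i
    rw [hR]
    calc |∑ s ∈ Finset.Icc 1 k, ρ i (act s ω) (rew s ω)|
        ≤ ∑ s ∈ Finset.Icc 1 k, |ρ i (act s ω) (rew s ω)| := Finset.abs_sum_le_sum_abs _ _
      _ ≤ ∑ s ∈ Finset.Icc 1 k, U :=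
          Finset.sum_le_sum fun s _ => hρ_bound _ _ (fun b => hrew s ω b) i
      _ = k * U := by rw [Finset.sum_const, Nat.card_Icc, Nat.add_sub_cancel, nsmul_eq_mul]
  -- g facts
  have hg_nonneg : ∀ (v : ι → ℝ) i, 0 ≤ g v i := by
    intro v i
    rw [hg]
    exact mul_nonneg hp0.le (Real.rpow_nonneg (le_max_right _ _) _)
  have hg_le : ∀ (v : ι → ℝ) (i : ι) (C : ℝ), 0 ≤ C → |v i| ≤ C →
      g v i ≤ p * C ^ (p - 1) := by
    intro v i C hC hv
    rw [hg]
    refine mul_le_mul_of_nonneg_left ?_ hp0.le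
    exact Real.rpow_le_rpow (le_max_right _ _) (max_le (le_trans (le_abs_self _) hv) hC)
      (by linarith)
  -- measurability of slices ω ↦ ρ i a (rew K ω) (w.r.t. m (K-1))
  have hρslice : ∀ K, 1 ≤ K → ∀ (i : ι) (a : A),
      Measurable[m (K-1)] (fun ω => ρ i a (rew K ω)) := by
    intro K hK i a
    have hcomp : ∀ s : A, Measurable[m (K-1)] fun ω => rew K ω s :=
      fun s => (measurable_pi_apply s).comp (hrew_meas K hK)
    simp only [hρ]
    exact (Finset.measurable_sum univ fun s _ => (hcomp s).const_mul _).sub (hcomp a)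
  -- AESM of indicators of actions
  have hactm : ∀ K, 1 ≤ K → ∀ a : A,
      AEStronglyMeasurable (fun ω => (if act K ω = a then (1:ℝ) else 0)) μ :=
    fun K hK => aux_act_meas (mΩ := ‹MeasurableSpace Ω›) μ (hm (K-1)) (act K) (L K)
      (fun ω => hLsimplex K ω) (hcond K hK)
  -- AESM of δ components and Rcum
  have hδ_aesm : ∀ K, 1 ≤ K → ∀ i : ι,
      AEStronglyMeasurable (fun ω => ρ i (act K ω) (rew K ω)) μ := by
    intro K hK i
    have : (fun ω => ρ i (act K ω) (rew K ω)) =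
        fun ω => ∑ a, (if act K ω = a then (1:ℝ) else 0) * ρ i a (rew K ω) :=
      funext fun ω => aux_pick (act K ω) (fun a => ρ i a (rew K ω))
    rw [this]
    exact Finset.aestronglyMeasurable_fun_sum _ fun a _ =>
      (hactm K hK a).mul (((hρslice K hK i a).mono (hm _) le_rfl).aestronglyMeasurable)
  have hRcum_aesm : ∀ (k : ℕ) (i : ι), AEStronglyMeasurable (fun ω => Rcum k ω i) μ := by
    intro k i
    have : (fun ω => Rcum k ω i) = fun ω => ∑ s ∈ Finset.Icc 1 k, ρ i (act s ω) (rew s ω) :=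
      funext fun ω => hR k ω i
    rw [this]
    exact Finset.aestronglyMeasurable_fun_sum _ fun s hs =>
      hδ_aesm s (Finset.mem_Icc.1 hs).1 i
  -- bounded + AESM → integrable
  have hbint : ∀ (h : Ω → ℝ) (C : ℝ), AEStronglyMeasurable h μ → (∀ ω, |h ω| ≤ C) →
      Integrable h μ := fun h C hh hb =>
    (integrable_const C).mono' hh (ae_of_all _ fun ω => by rw [Real.norm_eq_abs]; exact hb ω)
  -- integrability of ∑|g(Rcum k)| and ∑|g(Rtil k)|
  have hgR_int : ∀ k : ℕ, Integrable (fun ω => ∑ i, |g (Rcum k ω) i|) μ := by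
    intro k
    refine hbint _ ((Fintype.card ι : ℝ) * (p * ((k:ℝ) * U) ^ (p - 1))) ?_ ?_
    · simp only [hg]
      exact Finset.aestronglyMeasurable_fun_sum _ fun i _ =>
        hc1'.abs.comp_aestronglyMeasurable (hRcum_aesm k i)
    · intro ω
      rw [abs_of_nonneg (Finset.sum_nonneg fun i _ => abs_nonneg _)]
      have := Finset.sum_le_card_nsmul univ (fun i => |g (Rcum k ω) i|)
        (p * ((k:ℝ) * U) ^ (p - 1)) (fun i _ => by
          show |g (Rcum k ω) i| ≤ _
          rw [abs_of_nonneg (hg_nonneg _ i)]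
          exact hg_le _ i _ (by positivity) (hRbound k ω i))
      simpa [Finset.card_univ, nsmul_eq_mul] using this
  have hgT_int : ∀ K, 1 ≤ K → Integrable (fun ω => ∑ i, |g (Rtil (K-1) ω) i|) μ := by
    intro K hK
    have haesm : AEStronglyMeasurable (fun ω => ∑ i, |g (Rtil (K-1) ω) i|) μ := by
      simp only [hg]
      exact Finset.aestronglyMeasurable_fun_sum _ fun i _ =>
        hc1'.abs.comp_aestronglyMeasurable
          (((measurable_pi_apply i).comp
            ((hRtil_meas K hK).mono (hm _) le_rfl)).aestronglyMeasurable)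
    refine ((hinterr (K-1)).add (hgR_int (K-1))).mono' haesm (ae_of_all _ fun ω => ?_)
    rw [Real.norm_eq_abs, abs_of_nonneg (Finset.sum_nonneg fun i _ => abs_nonneg _),
      Pi.add_apply]
    calc ∑ i, |g (Rtil (K-1) ω) i|
        ≤ ∑ i, (|g (Rcum (K-1) ω) i - g (Rtil (K-1) ω) i| + |g (Rcum (K-1) ω) i|) := by
          refine Finset.sum_le_sum fun i _ => ?_
          have h1 := abs_sub_abs_le_abs_sub (g (Rtil (K-1) ω) i) (g (Rcum (K-1) ω) i)
          rw [abs_sub_comm] at h1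
          linarith
      _ = (∑ i, |g (Rcum (K-1) ω) i - g (Rtil (K-1) ω) i|) + ∑ i, |g (Rcum (K-1) ω) i| :=
          Finset.sum_add_distrib
  -- the X functions: measurable w.r.t. m (K-1) and integrable
  have hXmeas : ∀ K, 1 ≤ K → ∀ a : A,
      Measurable[m (K-1)] (fun ω => ∑ i, g (Rtil (K-1) ω) i * ρ i a (rew K ω)) := by
    intro K hK a
    refine Finset.measurable_sum univ fun i _ => Measurable.mul ?_ (hρslice K hK i a)
    simp only [hg]
    exact hc1'.measurable.comp ((measurable_pi_apply i).comp (hRtil_meas K hK))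
  have hXbound : ∀ K (ω : Ω) (a : A),
      |∑ i, g (Rtil (K-1) ω) i * ρ i a (rew K ω)| ≤ U * ∑ i, |g (Rtil (K-1) ω) i| := by
    intro K ω a
    calc |∑ i, g (Rtil (K-1) ω) i * ρ i a (rew K ω)|
        ≤ ∑ i, |g (Rtil (K-1) ω) i * ρ i a (rew K ω)| := Finset.abs_sum_le_sum_abs _ _
      _ ≤ ∑ i, |g (Rtil (K-1) ω) i| * U := by
          refine Finset.sum_le_sum fun i _ => ?_
          rw [abs_mul]
          exact mul_le_mul_of_nonneg_left
            (hρ_bound a _ (fun b => hrew K ω b) i) (abs_nonneg _)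
      _ = U * ∑ i, |g (Rtil (K-1) ω) i| := by rw [← Finset.sum_mul, mul_comm]
  have hXint : ∀ K, 1 ≤ K → ∀ a : A,
      Integrable (fun ω => ∑ i, g (Rtil (K-1) ω) i * ρ i a (rew K ω)) μ := by
    intro K hK a
    refine ((hgT_int K hK).const_mul U).mono'
      (((hXmeas K hK a).mono (hm _) le_rfl).aestronglyMeasurable)
      (ae_of_all _ fun ω => ?_)
    rw [Real.norm_eq_abs]
    exact hXbound K ω a
  -- zero expectation of the R̃-weighted regret increment
  have hzero : ∀ K, 1 ≤ K →
      ∫ ω, (∑ i, g (Rtil (K-1) ω) i * ρ i (act K ω) (rew K ω)) ∂μ = 0 := by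
    intro K hK
    have h1 : ∫ ω, (∑ i, g (Rtil (K-1) ω) i * ρ i (act K ω) (rew K ω)) ∂μ
        = ∫ ω, ∑ a, (∑ i, g (Rtil (K-1) ω) i * ρ i a (rew K ω)) * L K ω a ∂μ :=
      aux_integral_act (mΩ := ‹MeasurableSpace Ω›) μ (hm (K-1)) (act K) (L K)
        (fun ω => hLsimplex K ω) (hcond K hK)
        (fun a ω => ∑ i, g (Rtil (K-1) ω) i * ρ i a (rew K ω))
        (fun a => (hXmeas K hK a).stronglyMeasurable) (fun a => hXint K hK a)
    rw [h1]
    have h2 : ∀ ω, ∑ a, (∑ i, g (Rtil (K-1) ω) i * ρ i a (rew K ω)) * L K ω a = 0 := by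
      intro ω
      have hc : (∑ i, f (Rtil (K-1) ω) i) = ∑ i, f (Rtil (K-1) ω) i := rfl
      have hfx : ∀ s, ∑ i, f (Rtil (K-1) ω) i * (∑ b, L K ω b * φ i b s)
          = L K ω s * ∑ i, f (Rtil (K-1) ω) i := by
        intro s
        have h3 := hfix K hK ω s
        rw [div_eq_iff (hden K hK ω).ne'] at h3
        exact h3
      have h4 := aux_fixed_point p (∑ i, f (Rtil (K-1) ω) i) (f (Rtil (K-1) ω))
        (L K ω) (rew K ω) (fun i b s => φ i b s) rfl (fun s => hfx s)
      calc ∑ a, (∑ i, g (Rtil (K-1) ω) i * ρ i a (rew K ω)) * L K ω a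
          = ∑ a, (∑ i, (p * f (Rtil (K-1) ω) i) *
              ((∑ s, φ i a s * rew K ω s) - rew K ω a)) * L K ω a := by
            simp only [hg, hf, hρ]
        _ = 0 := h4
    simp only [h2, integral_zero]
  -- Σ|δ|^p ≤ U^p μΦ
  have hδp : ∀ (n : ℕ) (ω : Ω),
      ∑ i, |ρ i (act (n+1) ω) (rew (n+1) ω)| ^ p ≤ U ^ p * (μΦ:ℝ) := by
    intro n ω
    set a := act (n+1) ω with ha
    rw [← Finset.sum_filter_add_sum_filter_not univ
      (fun i => φ i a = fun b => if b = a then (1:ℝ) else 0)]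
    have hz : ∑ i ∈ univ.filter (fun i => φ i a = fun b => if b = a then (1:ℝ) else 0),
        |ρ i a (rew (n+1) ω)| ^ p = 0 := by
      refine Finset.sum_eq_zero fun i hi => ?_
      rw [hρ_zero a _ i (Finset.mem_filter.1 hi).2, abs_zero, Real.zero_rpow hp0.ne']
    have h1 : ∑ i ∈ univ.filter (fun i => ¬ φ i a = fun b => if b = a then (1:ℝ) else 0),
        |ρ i a (rew (n+1) ω)| ^ p
        ≤ (univ.filter (fun i => ¬ φ i a = fun b => if b = a then (1:ℝ) else 0)).card
          • (U ^ p) := by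
      refine Finset.sum_le_card_nsmul _ _ _ fun i _ => ?_
      exact Real.rpow_le_rpow (abs_nonneg _) (hρ_bound a _ (fun b => hrew (n+1) ω b) i) hp0.le
    have h2 : ((univ.filter (fun i => ¬ φ i a = fun b => if b = a then (1:ℝ) else 0)).card : ℝ)
        ≤ (μΦ : ℝ) := by
      have := hμΦ ▸ Finset.le_sup (f := fun a : A =>
        (univ.filter (fun i : ι => φ i a ≠ fun b => if b = a then 1 else 0)).card)
        (Finset.mem_univ a)
      exact_mod_cast this
    rw [hz, zero_add]
    refine h1.trans ?_
    rw [nsmul_eq_mul]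
    calc ((univ.filter (fun i => ¬ φ i a = fun b => if b = a then (1:ℝ) else 0)).card : ℝ)
          * U ^ p
        ≤ (μΦ : ℝ) * U ^ p := mul_le_mul_of_nonneg_right h2 (by positivity)
      _ = U ^ p * (μΦ:ℝ) := mul_comm _ _
  -- pointwise one-step potential inequality
  have hstep_pt : ∀ (n : ℕ) (ω : Ω),
      (∑ i, (max (Rcum (n+1) ω i) 0) ^ p) ≤ (∑ i, (max (Rcum n ω i) 0) ^ p)
        + (∑ i, g (Rcum n ω) i * ρ i (act (n+1) ω) (rew (n+1) ω)) + U ^ p * (μΦ:ℝ) := by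
    intro n ω
    have hsm : ∀ i : ι, (max (Rcum (n+1) ω i) 0) ^ p ≤ (max (Rcum n ω i) 0) ^ p
        + g (Rcum n ω) i * ρ i (act (n+1) ω) (rew (n+1) ω)
        + |ρ i (act (n+1) ω) (rew (n+1) ω)| ^ p := by
      intro i
      have h := aux_smooth hp1 hp2 (Rcum n ω i) (ρ i (act (n+1) ω) (rew (n+1) ω))
      rw [← hRrec n ω i] at h
      rw [hg]
      exact h
    calc ∑ i, (max (Rcum (n+1) ω i) 0) ^ p
        ≤ ∑ i, ((max (Rcum n ω i) 0) ^ p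
            + g (Rcum n ω) i * ρ i (act (n+1) ω) (rew (n+1) ω)
            + |ρ i (act (n+1) ω) (rew (n+1) ω)| ^ p) :=
          Finset.sum_le_sum fun i _ => hsm i
      _ = (∑ i, (max (Rcum n ω i) 0) ^ p)
            + (∑ i, g (Rcum n ω) i * ρ i (act (n+1) ω) (rew (n+1) ω))
            + ∑ i, |ρ i (act (n+1) ω) (rew (n+1) ω)| ^ p := by
          rw [Finset.sum_add_distrib, Finset.sum_add_distrib]
      _ ≤ (∑ i, (max (Rcum n ω i) 0) ^ p)
            + (∑ i, g (Rcum n ω) i * ρ i (act (n+1) ω) (rew (n+1) ω)) + U ^ p * (μΦ:ℝ) :=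
          add_le_add_right (hδp n ω) _
  -- pointwise comparison between R and R̃ weighted increments
  have hswap : ∀ (n : ℕ) (ω : Ω),
      (∑ i, g (Rcum n ω) i * ρ i (act (n+1) ω) (rew (n+1) ω))
        ≤ (∑ i, g (Rtil n ω) i * ρ i (act (n+1) ω) (rew (n+1) ω))
          + U * ∑ i, |g (Rcum n ω) i - g (Rtil n ω) i| := by
    intro n ω
    have h1 : ∑ i, (g (Rcum n ω) i - g (Rtil n ω) i) * ρ i (act (n+1) ω) (rew (n+1) ω)
        ≤ ∑ i, |g (Rcum n ω) i - g (Rtil n ω) i| * U := by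
      refine Finset.sum_le_sum fun i _ => ?_
      calc (g (Rcum n ω) i - g (Rtil n ω) i) * ρ i (act (n+1) ω) (rew (n+1) ω)
          ≤ |(g (Rcum n ω) i - g (Rtil n ω) i) * ρ i (act (n+1) ω) (rew (n+1) ω)| :=
            le_abs_self _
        _ = |g (Rcum n ω) i - g (Rtil n ω) i| * |ρ i (act (n+1) ω) (rew (n+1) ω)| :=
            abs_mul _ _
        _ ≤ |g (Rcum n ω) i - g (Rtil n ω) i| * U :=
            mul_le_mul_of_nonneg_left (hρ_bound _ _ (fun b => hrew (n+1) ω b) i) (abs_nonneg _)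
    have h2 : ∑ i, (g (Rcum n ω) i - g (Rtil n ω) i) * ρ i (act (n+1) ω) (rew (n+1) ω)
        = (∑ i, g (Rcum n ω) i * ρ i (act (n+1) ω) (rew (n+1) ω))
          - ∑ i, g (Rtil n ω) i * ρ i (act (n+1) ω) (rew (n+1) ω) := by
      rw [← Finset.sum_sub_distrib]
      exact Finset.sum_congr rfl fun i _ => by ring
    have h3 : ∑ i, |g (Rcum n ω) i - g (Rtil n ω) i| * U
        = U * ∑ i, |g (Rcum n ω) i - g (Rtil n ω) i| := by
      rw [← Finset.sum_mul, mul_comm]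
    rw [h2, h3] at h1
    linarith
  -- integrability of the potential and the increments
  have hF_int : ∀ n : ℕ, Integrable (fun ω => ∑ i, (max (Rcum n ω i) 0) ^ p) μ := by
    intro n
    refine hbint _ ((Fintype.card ι : ℝ) * ((n:ℝ) * U) ^ p)
      (Finset.aestronglyMeasurable_fun_sum _ fun i _ =>
        hcp.comp_aestronglyMeasurable (hRcum_aesm n i)) fun ω => ?_
    rw [abs_of_nonneg (Finset.sum_nonneg fun i _ => Real.rpow_nonneg (le_max_right _ _) _)]
    have := Finset.sum_le_card_nsmul univ (fun i => (max (Rcum n ω i) 0) ^ p)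
      (((n:ℝ) * U) ^ p) (fun i _ => by
        show (max (Rcum n ω i) 0) ^ p ≤ _
        exact Real.rpow_le_rpow (le_max_right _ _)
          (max_le ((le_abs_self _).trans (hRbound n ω i)) (by positivity)) hp0.le)
    simpa [Finset.card_univ, nsmul_eq_mul] using this
  have hgδ_int : ∀ n : ℕ, Integrable
      (fun ω => ∑ i, g (Rcum n ω) i * ρ i (act (n+1) ω) (rew (n+1) ω)) μ := by
    intro n
    have haesm : ∀ i : ι, AEStronglyMeasurable (fun ω => g (Rcum n ω) i) μ := by
      intro i
      simp only [hg]
      exact hc1'.comp_aestronglyMeasurable (hRcum_aesm n i)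
    refine hbint _ ((Fintype.card ι : ℝ) * (p * ((n:ℝ) * U) ^ (p-1) * U))
      (Finset.aestronglyMeasurable_fun_sum _ fun i _ =>
        (haesm i).mul (hδ_aesm (n+1) (Nat.le_add_left 1 n) i)) fun ω => ?_
    calc |∑ i, g (Rcum n ω) i * ρ i (act (n+1) ω) (rew (n+1) ω)|
        ≤ ∑ i, |g (Rcum n ω) i * ρ i (act (n+1) ω) (rew (n+1) ω)| :=
          Finset.abs_sum_le_sum_abs _ _
      _ ≤ ∑ i : ι, p * ((n:ℝ) * U) ^ (p-1) * U := by
          refine Finset.sum_le_sum fun i _ => ?_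
          rw [abs_mul]
          refine mul_le_mul ?_ (hρ_bound _ _ (fun b => hrew (n+1) ω b) i)
            (abs_nonneg _) (by positivity)
          rw [abs_of_nonneg (hg_nonneg _ i)]
          exact hg_le _ i _ (by positivity) (hRbound n ω i)
      _ = (Fintype.card ι : ℝ) * (p * ((n:ℝ) * U) ^ (p-1) * U) := by
          rw [Finset.sum_const, Finset.card_univ, nsmul_eq_mul]
  have hgTδ_int : ∀ n : ℕ, Integrable
      (fun ω => ∑ i, g (Rtil n ω) i * ρ i (act (n+1) ω) (rew (n+1) ω)) μ := by
    intro n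
    have haesm : ∀ i : ι, AEStronglyMeasurable (fun ω => g (Rtil n ω) i) μ := by
      intro i
      simp only [hg]
      exact hc1'.comp_aestronglyMeasurable
        (((measurable_pi_apply i).comp
          ((hRtil_meas (n+1) (Nat.le_add_left 1 n)).mono (hm _) le_rfl)).aestronglyMeasurable)
    refine ((hgT_int (n+1) (Nat.le_add_left 1 n)).const_mul U).mono'
      (Finset.aestronglyMeasurable_fun_sum _ fun i _ =>
        (haesm i).mul (hδ_aesm (n+1) (Nat.le_add_left 1 n) i))
      (ae_of_all _ fun ω => ?_)
    rw [Real.norm_eq_abs]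
    exact hXbound (n+1) ω (act (n+1) ω)
  -- main induction
  have hmain : ∀ n : ℕ, ∫ ω, (∑ i, (max (Rcum n ω i) 0) ^ p) ∂μ ≤
      (n:ℝ) * U ^ p * (μΦ:ℝ) + 2 * U * ∑ k ∈ Finset.Icc 1 n,
        ∫ ω, ∑ i, |g (Rcum (k-1) ω) i - g (Rtil (k-1) ω) i| ∂μ := by
    intro n
    induction n with
    | zero =>
      have h0 : ∀ (ω : Ω) (i : ι), Rcum 0 ω i = 0 := fun ω i => by
        rw [hR]; simp
      simp [h0, Real.zero_rpow hp0.ne']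
    | succ n ih =>
      have herr_nonneg : 0 ≤ ∫ ω, ∑ i, |g (Rcum n ω) i - g (Rtil n ω) i| ∂μ :=
        integral_nonneg fun ω => Finset.sum_nonneg fun i _ => abs_nonneg _
      have hint2 : Integrable (fun ω => (∑ i, (max (Rcum n ω i) 0) ^ p)
          + (∑ i, g (Rcum n ω) i * ρ i (act (n+1) ω) (rew (n+1) ω)) + U ^ p * (μΦ:ℝ)) μ :=
        ((hF_int n).add (hgδ_int n)).add (integrable_const _)
      have h1 : ∫ ω, (∑ i, (max (Rcum (n+1) ω i) 0) ^ p) ∂μ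
          ≤ ∫ ω, ((∑ i, (max (Rcum n ω i) 0) ^ p)
            + (∑ i, g (Rcum n ω) i * ρ i (act (n+1) ω) (rew (n+1) ω)) + U ^ p * (μΦ:ℝ)) ∂μ :=
        integral_mono (hF_int (n+1)) hint2 fun ω => hstep_pt n ω
      have hIa : Integrable (fun ω => (∑ i, (max (Rcum n ω i) 0) ^ p)
          + (∑ i, g (Rcum n ω) i * ρ i (act (n+1) ω) (rew (n+1) ω))) μ :=
        (hF_int n).add (hgδ_int n)
      rw [integral_add hIa (integrable_const _),
        integral_add (hF_int n) (hgδ_int n), integral_const] at h1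
      simp only [probReal_univ, smul_eq_mul, one_mul] at h1
      -- bound the middle integral
      have h3 : ∫ ω, (∑ i, g (Rcum n ω) i * ρ i (act (n+1) ω) (rew (n+1) ω)) ∂μ
          ≤ ∫ ω, ((∑ i, g (Rtil n ω) i * ρ i (act (n+1) ω) (rew (n+1) ω))
            + U * ∑ i, |g (Rcum n ω) i - g (Rtil n ω) i|) ∂μ :=
        integral_mono (hgδ_int n) ((hgTδ_int n).add ((hinterr n).const_mul U))
          fun ω => hswap n ω
      rw [integral_add (hgTδ_int n) ((hinterr n).const_mul U), integral_const_mul] at h3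
      have hz := hzero (n+1) (Nat.le_add_left 1 n)
      simp only [Nat.add_sub_cancel] at hz
      rw [hz, zero_add] at h3
      -- assemble
      rw [Finset.sum_Icc_succ_top (Nat.le_add_left 1 n)]
      simp only [Nat.add_sub_cancel]
      push_cast
      nlinarith [h1, h3, ih, herr_nonneg, hU]
  -- final chain
  have hFnn : ∀ ω, 0 ≤ ∑ i, (max (Rcum t ω i) 0) ^ p :=
    fun ω => Finset.sum_nonneg fun i _ => Real.rpow_nonneg (le_max_right _ _) _
  have hsup_pt : ∀ ω, (Finset.univ.sup' Finset.univ_nonempty (Rcum t ω))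
      ≤ (∑ i, (max (Rcum t ω i) 0) ^ p) ^ (1/p) := by
    intro ω
    refine Finset.sup'_le _ _ fun i _ => ?_
    have h1 : (max (Rcum t ω i) 0) ^ p ≤ ∑ j, (max (Rcum t ω j) 0) ^ p :=
      Finset.single_le_sum (fun j _ => Real.rpow_nonneg (le_max_right _ _) _)
        (Finset.mem_univ i)
    have h2 : ((max (Rcum t ω i) 0) ^ p) ^ (1/p) = max (Rcum t ω i) 0 := by
      rw [← Real.rpow_mul (le_max_right _ _), mul_one_div_cancel hp0.ne', Real.rpow_one]
    calc Rcum t ω i ≤ max (Rcum t ω i) 0 := le_max_left _ _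
      _ = ((max (Rcum t ω i) 0) ^ p) ^ (1/p) := h2.symm
      _ ≤ (∑ j, (max (Rcum t ω j) 0) ^ p) ^ (1/p) :=
        Real.rpow_le_rpow (Real.rpow_nonneg (le_max_right _ _) _) h1 (by positivity)
  have hF13 : Integrable (fun ω => (∑ i, (max (Rcum t ω i) 0) ^ p) ^ (1/p)) μ := by
    refine hbint _ (((Fintype.card ι : ℝ) * ((t:ℝ) * U) ^ p) ^ (1/p))
      ((aux_continuous_rpow (show (0:ℝ) < 1/p by positivity)).comp_aestronglyMeasurable
        (hF_int t).aestronglyMeasurable) fun ω => ?_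
    rw [abs_of_nonneg (Real.rpow_nonneg (hFnn ω) _)]
    refine Real.rpow_le_rpow (hFnn ω) ?_ (by positivity)
    have := Finset.sum_le_card_nsmul univ (fun i => (max (Rcum t ω i) 0) ^ p)
      (((t:ℝ) * U) ^ p) (fun i _ => by
        show (max (Rcum t ω i) 0) ^ p ≤ _
        exact Real.rpow_le_rpow (le_max_right _ _)
          (max_le ((le_abs_self _).trans (hRbound t ω i)) (by positivity)) hp0.le)
    simpa [Finset.card_univ, nsmul_eq_mul] using this
  have hjensen : ∫ ω, (∑ i, (max (Rcum t ω i) 0) ^ p) ^ (1/p) ∂μ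
      ≤ (∫ ω, (∑ i, (max (Rcum t ω i) 0) ^ p) ∂μ) ^ (1/p) := by
    have hconc : ConcaveOn ℝ (Set.Ici 0) (fun x : ℝ => x ^ (1/p)) :=
      Real.concaveOn_rpow (by positivity) (by rw [div_le_one hp0]; linarith)
    exact hconc.le_map_integral
      ((aux_continuous_rpow (show (0:ℝ) < 1/p by positivity)).continuousOn) isClosed_Ici
      (ae_of_all _ fun ω => Set.mem_Ici.2 (hFnn ω)) (hF_int t) hF13
  have hM1 : ∫ ω, Finset.univ.sup' Finset.univ_nonempty (Rcum t ω) ∂μ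
      ≤ ∫ ω, (∑ i, (max (Rcum t ω i) 0) ^ p) ^ (1/p) ∂μ :=
    integral_mono (hintmax t) hF13 fun ω => hsup_pt ω
  have hBp : (∫ ω, (∑ i, (max (Rcum t ω i) 0) ^ p) ∂μ) ^ (1/p)
      ≤ ((t:ℝ) * U ^ p * (μΦ:ℝ) + 2 * U * ∑ k ∈ Finset.Icc 1 t,
        ∫ ω, ∑ i, |g (Rcum (k-1) ω) i - g (Rtil (k-1) ω) i| ∂μ) ^ (1/p) :=
    Real.rpow_le_rpow (integral_nonneg fun ω => hFnn ω) (hmain t) (by positivity)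
  have ht0 : (0:ℝ) < t := by exact_mod_cast Nat.lt_of_lt_of_le Nat.zero_lt_one ht
  calc ∫ ω, (Finset.univ.sup' Finset.univ_nonempty (Rcum t ω)) / t ∂μ
      = (∫ ω, Finset.univ.sup' Finset.univ_nonempty (Rcum t ω) ∂μ) / t :=
        integral_div _ _
    _ ≤ ((t:ℝ) * U ^ p * (μΦ:ℝ) + 2 * U * ∑ k ∈ Finset.Icc 1 t,
        ∫ ω, ∑ i, |g (Rcum (k-1) ω) i - g (Rtil (k-1) ω) i| ∂μ) ^ (1/p) / t := by
        gcongr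
        exact (hM1.trans hjensen).trans hBp
    _ = (1 / (t:ℝ)) * (((t:ℝ) * U ^ p * (μΦ:ℝ) + 2 * U * ∑ k ∈ Finset.Icc 1 t,
        ∫ ω, ∑ i, |g (Rcum (k-1) ω) i - g (Rtil (k-1) ω) i| ∂μ) ^ (1/p)) :=
        (one_div_mul_eq_div _ _).symm
end

section
/- (Exponential link / approximate Hedge) An approximate (Φ, f)-regret-matching algorithm with exponential link f(x)_i = e^{η x_i}, η > 0, guarantees E[max_φ (1/t) R^φ_t] ≤ (1/t)( ln|Φ|/η + 2U Σ_{k=1}^t ‖g(R^Φ_{k−1}) − g(R̃^Φ_{k−1})‖_1 ) + ηU²/2, where g(x)_i = e^{η x_i}/Σ_j e^{η x_j}. -/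
open MeasureTheory Finset
open scoped Classical

lemma my_cgf_bound {ι : Type*} [Fintype ι] [Nonempty ι] (p y : ι → ℝ) (hp : ∀ i, 0 ≤ p i)
    (hps : ∑ i, p i = 1) (U η : ℝ) (hη : 0 ≤ η) (hy : ∀ i, |y i| ≤ U) :
    Real.log (∑ i, p i * Real.exp (η * y i)) ≤ η * (∑ i, p i * y i) + η ^ 2 * U ^ 2 / 2 := by
  set c := ∑ i, p i * y i with hc
  set N : ℝ → ℝ := fun s => ∑ i, p i * Real.exp (s * y i) with hN
  set N1 : ℝ → ℝ := fun s => ∑ i, p i * (Real.exp (s * y i) * y i) with hN1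
  set N2 : ℝ → ℝ := fun s => ∑ i, p i * (Real.exp (s * y i) * y i * y i) with hN2
  have hex : ∃ i : ι, 0 < p i := by
    by_contra h
    push_neg at h
    have : (∑ i, p i) ≤ 0 := Finset.sum_nonpos fun i _ => h i
    linarith [hps]
  have hNpos : ∀ s, 0 < N s := by
    intro s
    obtain ⟨i0, hi0⟩ := hex
    refine Finset.sum_pos' (fun i _ => mul_nonneg (hp i) (Real.exp_pos _).le)
      ⟨i0, Finset.mem_univ _, mul_pos hi0 (Real.exp_pos _)⟩
  have hNd : ∀ s, HasDerivAt N (N1 s) s := by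
    intro s
    apply HasDerivAt.fun_sum
    intro i _
    exact ((hasDerivAt_mul_const (y i)).exp).const_mul (p i)
  have hN1d : ∀ s, HasDerivAt N1 (N2 s) s := by
    intro s
    apply HasDerivAt.fun_sum
    intro i _
    exact (((hasDerivAt_mul_const (y i)).exp).mul_const (y i)).const_mul (p i)
  have hysq : ∀ i, y i ^ 2 ≤ U ^ 2 := by
    intro i
    have := hy i
    nlinarith [abs_nonneg (y i), sq_abs (y i)]
  have hN2le : ∀ s, N2 s ≤ U ^ 2 * N s := by
    intro s
    rw [hN2, hN, Finset.mul_sum]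
    apply Finset.sum_le_sum
    intro i _
    have h1 : Real.exp (s * y i) * y i * y i ≤ U ^ 2 * Real.exp (s * y i) := by
      have he : 0 < Real.exp (s * y i) := Real.exp_pos _
      nlinarith [hysq i]
    calc p i * (Real.exp (s * y i) * y i * y i) ≤ p i * (U ^ 2 * Real.exp (s * y i)) :=
          mul_le_mul_of_nonneg_left h1 (hp i)
      _ = U ^ 2 * (p i * Real.exp (s * y i)) := by ring
  set F1 : ℝ → ℝ := fun s => N1 s / N s - c - s * U ^ 2 with hF1
  have hF1d : ∀ s, HasDerivAt F1 ((N2 s * N s - N1 s * N1 s) / N s ^ 2 - U ^ 2) s := by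
    intro s
    exact (((hN1d s).div (hNd s) (ne_of_gt (hNpos s))).sub_const c).sub
      (hasDerivAt_mul_const (U ^ 2))
  have hF1anti : Antitone F1 := by
    apply antitone_of_deriv_nonpos
    · exact fun s => ((hF1d s).differentiableAt)
    · intro s
      rw [(hF1d s).deriv]
      have hN2N : N2 s * N s - N1 s * N1 s ≤ U ^ 2 * N s ^ 2 := by
        nlinarith [hN2le s, hNpos s, sq_nonneg (N1 s)]
      have : (N2 s * N s - N1 s * N1 s) / N s ^ 2 ≤ U ^ 2 := by
        rw [div_le_iff₀ (pow_pos (hNpos s) 2)]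
        nlinarith [hN2N]
      linarith
  have hN0 : N 0 = 1 := by simp [hN, hps]
  have hN10 : N1 0 = c := by simp [hN1, hc]
  have hF10 : F1 0 = 0 := by simp [hF1, hN0, hN10]
  set F2 : ℝ → ℝ := fun s => Real.log (N s) - s * c - s ^ 2 * (U ^ 2 / 2) with hF2
  have hF2d : ∀ s, HasDerivAt F2 (F1 s) s := by
    intro s
    have h := (((hNd s).log (ne_of_gt (hNpos s))).sub (hasDerivAt_mul_const c)).sub
      ((hasDerivAt_pow 2 s).mul_const (U ^ 2 / 2))
    exact h.congr_deriv (by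
    rw [hF1]
    push_cast
    ring)
  have hF2anti : AntitoneOn F2 (Set.Ici (0 : ℝ)) := by
    apply antitoneOn_of_deriv_nonpos (convex_Ici 0)
    · exact fun s _ => ((hF2d s).differentiableAt).continuousAt.continuousWithinAt
    · exact fun s _ => ((hF2d s).differentiableAt).differentiableWithinAt
    · intro s hs
      rw [(hF2d s).deriv]
      have : F1 s ≤ F1 0 := hF1anti (le_of_lt (by simpa using hs))
      linarith [hF10]
  have hfin : F2 η ≤ F2 0 := hF2anti (Set.mem_Ici.2 le_rfl) (Set.mem_Ici.2 hη) hη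
  have hF20 : F2 0 = 0 := by simp [hF2, hN0]
  have : Real.log (N η) - η * c - η ^ 2 * (U ^ 2 / 2) ≤ 0 := by
    rw [hF20] at hfin
    simpa [hF2] using hfin
  have hNη : N η = ∑ i, p i * Real.exp (η * y i) := rfl
  rw [← hNη]
  linarith


lemma my_lse_step {ι : Type*} [Fintype ι] [Nonempty ι] (η U : ℝ) (hη : 0 < η)
    (x y : ι → ℝ) (hy : ∀ i, |y i| ≤ U) :
    Real.log (∑ i, Real.exp (η * (x i + y i))) / η ≤
      Real.log (∑ i, Real.exp (η * x i)) / η +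
      (∑ i, (Real.exp (η * x i) / ∑ j, Real.exp (η * x j)) * y i) + η * U ^ 2 / 2 := by
  have hZpos : 0 < ∑ j, Real.exp (η * x j) :=
    Finset.sum_pos (fun j _ => Real.exp_pos _) Finset.univ_nonempty
  have hcgf : Real.log (∑ i, (Real.exp (η * x i) / ∑ j, Real.exp (η * x j)) * Real.exp (η * y i)) ≤
      η * (∑ i, (Real.exp (η * x i) / ∑ j, Real.exp (η * x j)) * y i) + η ^ 2 * U ^ 2 / 2 := by
    apply my_cgf_bound (fun i => Real.exp (η * x i) / ∑ j, Real.exp (η * x j)) y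
      (fun i => by positivity) ?_ U η hη.le hy
    rw [← Finset.sum_div]
    exact div_self (ne_of_gt hZpos)
  set Z := ∑ j, Real.exp (η * x j) with hZ
  set M := ∑ i, Real.exp (η * x i) / Z * Real.exp (η * y i) with hM
  have hMpos : 0 < M :=
    Finset.sum_pos (fun i _ => mul_pos (div_pos (Real.exp_pos _) hZpos) (Real.exp_pos _))
      Finset.univ_nonempty
  have hsplit : (∑ i, Real.exp (η * (x i + y i))) = Z * M := by
    rw [hM, Finset.mul_sum]
    apply Finset.sum_congr rfl
    intro i _
    rw [mul_add, Real.exp_add]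
    field_simp
  rw [hsplit, Real.log_mul (ne_of_gt hZpos) (ne_of_gt hMpos)]
  have h2 : Real.log M / η ≤ (∑ i, Real.exp (η * x i) / Z * y i) + η * U ^ 2 / 2 := by
    rw [div_le_iff₀ hη]
    calc Real.log M ≤ η * (∑ i, Real.exp (η * x i) / Z * y i) + η ^ 2 * U ^ 2 / 2 := hcgf
      _ = ((∑ i, Real.exp (η * x i) / Z * y i) + η * U ^ 2 / 2) * η := by ring
  rw [add_div]
  linarith

lemma my_sup_le_lse {ι : Type*} [Fintype ι] [Nonempty ι] (η : ℝ) (hη : 0 < η) (v : ι → ℝ) :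
    Finset.univ.sup' Finset.univ_nonempty v ≤ Real.log (∑ i, Real.exp (η * v i)) / η := by
  apply Finset.sup'_le
  intro i _
  have h1 : Real.exp (η * v i) ≤ ∑ j, Real.exp (η * v j) :=
    Finset.single_le_sum (f := fun j => Real.exp (η * v j)) (fun j _ => (Real.exp_pos _).le) (Finset.mem_univ i)
  have h2 : η * v i ≤ Real.log (∑ j, Real.exp (η * v j)) := by
    calc η * v i = Real.log (Real.exp (η * v i)) := (Real.log_exp _).symm
      _ ≤ _ := Real.log_le_log (Real.exp_pos _) h1
  rw [le_div_iff₀ hη]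
  linarith

lemma my_lse_bound {ι : Type*} [Fintype ι] [Nonempty ι] (η B : ℝ) (hη : 0 < η) (hB : 0 ≤ B)
    (v : ι → ℝ) (hv : ∀ i, |v i| ≤ B) :
    |Real.log (∑ i, Real.exp (η * v i)) / η| ≤ Real.log (Fintype.card ι) / η + B := by
  have hn : (1 : ℝ) ≤ (Fintype.card ι : ℝ) := by
    exact_mod_cast Nat.one_le_iff_ne_zero.2 (Fintype.card_ne_zero)
  have hlogn : 0 ≤ Real.log (Fintype.card ι) := Real.log_nonneg hn
  have hup : Real.log (∑ i, Real.exp (η * v i)) ≤ Real.log (Fintype.card ι) + η * B := by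
    have h1 : (∑ i, Real.exp (η * v i)) ≤ (Fintype.card ι : ℝ) * Real.exp (η * B) := by
      calc (∑ i, Real.exp (η * v i)) ≤ ∑ _i : ι, Real.exp (η * B) := by
            apply Finset.sum_le_sum
            intro i _
            apply Real.exp_le_exp.2
            have := (abs_le.1 (hv i)).2
            nlinarith [hη.le]
        _ = (Fintype.card ι : ℝ) * Real.exp (η * B) := by
            simp [Finset.sum_const, Finset.card_univ, nsmul_eq_mul]
    calc Real.log (∑ i, Real.exp (η * v i)) ≤ Real.log ((Fintype.card ι : ℝ) * Real.exp (η * B)) :=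
          Real.log_le_log (Finset.sum_pos (fun i _ => Real.exp_pos _) Finset.univ_nonempty) h1
      _ = Real.log (Fintype.card ι) + η * B := by
          rw [Real.log_mul (by linarith) (ne_of_gt (Real.exp_pos _)), Real.log_exp]
  have hlow : -(η * B) ≤ Real.log (∑ i, Real.exp (η * v i)) := by
    obtain ⟨i0⟩ := (inferInstance : Nonempty ι)
    have h1 : Real.exp (η * v i0) ≤ ∑ j, Real.exp (η * v j) :=
      Finset.single_le_sum (f := fun j => Real.exp (η * v j)) (fun j _ => (Real.exp_pos _).le) (Finset.mem_univ i0)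
    have h2 : η * v i0 ≤ Real.log (∑ j, Real.exp (η * v j)) := by
      calc η * v i0 = Real.log (Real.exp (η * v i0)) := (Real.log_exp _).symm
        _ ≤ _ := Real.log_le_log (Real.exp_pos _) h1
    have := (abs_le.1 (hv i0)).1
    nlinarith [hη.le]
  rw [abs_le]
  constructor
  · rw [le_div_iff₀ hη]
    have : -(Real.log (Fintype.card ι) / η + B) * η = -(Real.log (Fintype.card ι)) - η * B := by
      field_simp; ring
    rw [this]
    linarith
  · rw [div_le_iff₀ hη]
    have : (Real.log (Fintype.card ι) / η + B) * η = Real.log (Fintype.card ι) + η * B := by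
      field_simp
    rw [this]
    linarith

lemma my_fix_zero {A ι : Type*} [Fintype A] [Fintype ι] (gv : ι → ℝ) (φ : ι → A → A → ℝ)
    (Lv : A → ℝ) (r : A → ℝ) (hgs : ∑ i, gv i = 1)
    (hfixg : ∀ a, ∑ i, gv i * (∑ b, Lv b * φ i b a) = Lv a) :
    ∑ a, (∑ i, gv i * ((∑ s, φ i a s * r s) - r a)) * Lv a = 0 := by
  have swap3 : ∀ (T : A → ι → A → ℝ), ∑ a, ∑ i, ∑ s, T a i s = ∑ s, ∑ i, ∑ a, T a i s := by
    intro T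
    calc ∑ a, ∑ i, ∑ s, T a i s
        = ∑ i, ∑ a, ∑ s, T a i s := Finset.sum_comm
      _ = ∑ i, ∑ s, ∑ a, T a i s := Finset.sum_congr rfl fun i _ => Finset.sum_comm
      _ = ∑ s, ∑ i, ∑ a, T a i s := Finset.sum_comm
  have h1 : ∀ a, ∑ i, gv i * ((∑ s, φ i a s * r s) - r a)
      = (∑ i, gv i * (∑ s, φ i a s * r s)) - r a := by
    intro a
    rw [Finset.sum_congr rfl (fun i (_ : i ∈ univ) => mul_sub (gv i) _ (r a)),
      Finset.sum_sub_distrib, ← Finset.sum_mul, hgs, one_mul]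
  have h2 : ∑ a, (∑ i, gv i * (∑ s, φ i a s * r s)) * Lv a = ∑ a, r a * Lv a := by
    have h3 : ∑ a, r a * Lv a = ∑ a, r a * (∑ i, gv i * (∑ b, Lv b * φ i b a)) :=
      Finset.sum_congr rfl fun a _ => by rw [hfixg a]
    rw [h3]
    calc ∑ a, (∑ i, gv i * (∑ s, φ i a s * r s)) * Lv a
        = ∑ a, ∑ i, ∑ s, gv i * (φ i a s * r s) * Lv a := by
          simp only [Finset.mul_sum, Finset.sum_mul]
      _ = ∑ s, ∑ i, ∑ a, gv i * (φ i a s * r s) * Lv a := swap3 _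
      _ = ∑ a, r a * (∑ i, gv i * (∑ b, Lv b * φ i b a)) := by
          simp only [Finset.mul_sum]
          refine Finset.sum_congr rfl fun s _ => ?_
          refine Finset.sum_congr rfl fun i _ => ?_
          refine Finset.sum_congr rfl fun a _ => ?_
          ring
  calc ∑ a, (∑ i, gv i * ((∑ s, φ i a s * r s) - r a)) * Lv a
      = ∑ a, ((∑ i, gv i * (∑ s, φ i a s * r s)) - r a) * Lv a :=
        Finset.sum_congr rfl fun a _ => by rw [h1 a]
    _ = (∑ a, (∑ i, gv i * (∑ s, φ i a s * r s)) * Lv a) - ∑ a, r a * Lv a := by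
        simp only [sub_mul, Finset.sum_sub_distrib]
    _ = 0 := by rw [h2, sub_self]

set_option maxHeartbeats 1000000 in
/-- Exponential link / approximate Hedge: an approximate
`(Φ, f)`-regret-matching algorithm with exponential link `f(x)_i = e^{η x_i}`, `η > 0`,
guarantees `E[max_φ (1/t) R^φ_t] ≤ (1/t)( ln|Φ|/η + 2U Σ_k E‖g(R_{k−1}) − g(R̃_{k−1})‖₁ ) + ηU²/2`,
where `g(x)_i = e^{η x_i}/Σ_j e^{η x_j}`. -/
theorem approx_regret_matching_exp_link
    {A ι Ω : Type*} [Fintype A] [DecidableEq A] [Fintype ι] [Nonempty ι]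
    [MeasurableSpace Ω] (μ : Measure Ω) [IsProbabilityMeasure μ]
    (U η : ℝ) (hU : 0 ≤ U) (hη : 0 < η)
    (φ : ι → A → A → ℝ) (hφ : ∀ i a, φ i a ∈ stdSimplex ℝ A)
    -- the polynomial link f and the normalized link g
    (f : (ι → ℝ) → ι → ℝ)
    (hf : ∀ v i, f v i = Real.exp (η * v i))
    (g : (ι → ℝ) → ι → ℝ)
    (hg : ∀ v i, g v i = Real.exp (η * v i) / ∑ j, Real.exp (η * v j))
    -- maximal activation μ(Φ)
    (μΦ : ℕ)
    (hμΦ : μΦ = Finset.univ.sup (fun a : A =>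
      (Finset.univ.filter (fun i : ι =>
        φ i a ≠ fun b => if b = a then 1 else 0)).card))
    -- regret
    (ρ : ι → A → (A → ℝ) → ℝ)
    (hρ : ∀ i a r, ρ i a r = (∑ s, φ i a s * r s) - r a)
    -- the stochastic process: actions, rewards, cumulative regrets, estimates, strategies
    (act : ℕ → Ω → A) (rew : ℕ → Ω → A → ℝ)
    (hrew : ∀ t ω a, rew t ω a ∈ Set.Icc 0 U)
    (Rcum : ℕ → Ω → ι → ℝ)
    (hR : ∀ t ω i, Rcum t ω i = ∑ s ∈ Finset.Icc 1 t, ρ i (act s ω) (rew s ω))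
    (Rtil : ℕ → Ω → ι → ℝ)
    (L : ℕ → Ω → A → ℝ)
    (hLsimplex : ∀ t ω, L t ω ∈ stdSimplex ℝ A)
    -- the algorithm plays the fixed point of the matrix built from f(R̃_{t-1})
    (hden : ∀ t : ℕ, 1 ≤ t → ∀ ω, 0 < ∑ i, f (Rtil (t - 1) ω) i)
    (hfix : ∀ t : ℕ, 1 ≤ t → ∀ ω a,
      (∑ i, f (Rtil (t - 1) ω) i * (∑ b, L t ω b * φ i b a)) /
        (∑ i, f (Rtil (t - 1) ω) i) = L t ω a)
    -- history filtration; estimates, strategy and round-t rewards are history-measurable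
    (m : ℕ → MeasurableSpace Ω)
    (hm : ∀ t, m t ≤ ‹MeasurableSpace Ω›)
    (hmono : Monotone m)
    (hRtil_meas : ∀ t : ℕ, 1 ≤ t → Measurable[m (t - 1)] (Rtil (t - 1)))
    (hL_meas : ∀ t : ℕ, 1 ≤ t → Measurable[m (t - 1)] (L t))
    (hrew_meas : ∀ t : ℕ, 1 ≤ t → Measurable[m (t - 1)] (rew t))
    -- the action a_t is sampled from L_t conditionally on the history
    (hcond : ∀ t : ℕ, 1 ≤ t → ∀ F : A → ℝ, ∀ᵐ ω ∂μ,
      (μ[(fun ω' => F (act t ω')) | m (t - 1)]) ω = ∑ b, L t ω b * F b)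
    -- integrability
    (hintmax : ∀ t, Integrable
      (fun ω => Finset.univ.sup' Finset.univ_nonempty (Rcum t ω)) μ)
    (hinterr : ∀ t, Integrable
      (fun ω => ∑ i, |g (Rcum t ω) i - g (Rtil t ω) i|) μ)
    (t : ℕ) (ht : 1 ≤ t) :
    ∫ ω, (Finset.univ.sup' Finset.univ_nonempty (Rcum t ω)) / t ∂μ ≤
      (1 / (t : ℝ)) * (
        Real.log (Fintype.card ι) / η +
        2 * U * ∑ k ∈ Finset.Icc 1 t,
          ∫ ω, ∑ i, |g (Rcum (k - 1) ω) i - g (Rtil (k - 1) ω) i| ∂μ) +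
      η * U ^ 2 / 2 := by
  -- notation
  obtain ⟨G, hG⟩ : ∃ G : ℕ → Ω → ℝ,
      ∀ k ω, G k ω = Real.log (∑ i, Real.exp (η * Rcum k ω i)) / η :=
    ⟨_, fun k ω => rfl⟩
  -- primed hypotheses at index j (round j+1)
  have hRtilm' : ∀ j : ℕ, Measurable[m j] (Rtil j) := fun j => by
    simpa using hRtil_meas (j + 1) (by omega)
  have hrewm' : ∀ j : ℕ, Measurable[m j] (rew (j + 1)) := fun j => by
    simpa using hrew_meas (j + 1) (by omega)
  have hLm' : ∀ j : ℕ, Measurable[m j] (L (j + 1)) := fun j => by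
    simpa using hL_meas (j + 1) (by omega)
  have hfix' : ∀ j : ℕ, ∀ ω a,
      (∑ i, f (Rtil j ω) i * (∑ b, L (j+1) ω b * φ i b a)) /
        (∑ i, f (Rtil j ω) i) = L (j+1) ω a := fun j ω a => by
    simpa using hfix (j + 1) (by omega) ω a
  have hden' : ∀ j : ℕ, ∀ ω, 0 < ∑ i, f (Rtil j ω) i := fun j ω => by
    simpa using hden (j + 1) (by omega) ω
  have hcond' : ∀ j : ℕ, ∀ F : A → ℝ, ∀ᵐ ω ∂μ,
      (μ[(fun ω' => F (act (j+1) ω')) | m j]) ω = ∑ b, L (j+1) ω b * F b := fun j F => by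
    simpa using hcond (j + 1) (by omega) F
  -- basic bounds
  have hSexp : ∀ v : ι → ℝ, 0 < ∑ j', Real.exp (η * v j') := fun v =>
    Finset.sum_pos (fun j' _ => Real.exp_pos _) Finset.univ_nonempty
  have hgpos : ∀ v i, 0 ≤ g v i := fun v i => by
    rw [hg]; positivity
  have hgsum : ∀ v, ∑ i, g v i = 1 := fun v => by
    simp only [hg, ← Finset.sum_div]
    exact div_self (ne_of_gt (hSexp v))
  have hρb : ∀ (i : ι) (a : A) (r : A → ℝ), (∀ s, r s ∈ Set.Icc 0 U) → |ρ i a r| ≤ U := by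
    intro i a r hr
    rw [hρ]
    have h0 : 0 ≤ ∑ s, φ i a s * r s :=
      Finset.sum_nonneg fun s _ => mul_nonneg ((hφ i a).1 s) (hr s).1
    have h1 : ∑ s, φ i a s * r s ≤ U := by
      calc ∑ s, φ i a s * r s ≤ ∑ s, φ i a s * U :=
            Finset.sum_le_sum fun s _ => mul_le_mul_of_nonneg_left (hr s).2 ((hφ i a).1 s)
        _ = U := by rw [← Finset.sum_mul, (hφ i a).2, one_mul]
    have h2 := (hr a).1
    have h3 := (hr a).2
    rw [abs_le]; constructor <;> linarith
  have hRb : ∀ k ω i, |Rcum k ω i| ≤ k * U := by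
    intro k ω i
    rw [hR]
    calc |∑ s ∈ Finset.Icc 1 k, ρ i (act s ω) (rew s ω)|
        ≤ ∑ s ∈ Finset.Icc 1 k, |ρ i (act s ω) (rew s ω)| := Finset.abs_sum_le_sum_abs _ _
      _ ≤ ∑ _s ∈ Finset.Icc 1 k, U :=
          Finset.sum_le_sum fun s _ => hρb _ _ _ (fun a => hrew s ω a)
      _ = k * U := by simp [Nat.card_Icc]
  -- ambient measurability of coordinates
  have hrewA : ∀ j (a : A), Measurable (fun ω => rew (j+1) ω a) := fun j a =>
    ((measurable_pi_apply a).comp (hrewm' j)).mono (hm j) le_rfl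
  -- a.e.-measurability of indicators of the action
  haveI hsf : ∀ j : ℕ, SigmaFinite (μ.trim (hm j)) := fun j => by infer_instance
  have hind : ∀ j : ℕ, ∀ a : A,
      AEStronglyMeasurable (fun ω => if act (j+1) ω = a then (1:ℝ) else 0) μ := by
    intro j
    haveI := hsf j
    set T : Finset A := Finset.univ.filter
      (fun a => ¬ AEStronglyMeasurable (fun ω => if act (j+1) ω = a then (1:ℝ) else 0) μ)
      with hTdef
    have hTz : ∀ a ∈ T, (fun ω => if act (j+1) ω = a then (1:ℝ) else 0) =ᵐ[μ] 0 := by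
      have hLz : ∀ a ∈ T, (fun ω => L (j+1) ω a) =ᵐ[μ] 0 := by
        intro a ha
        have hna : ¬ AEStronglyMeasurable (fun ω => if act (j+1) ω = a then (1:ℝ) else 0) μ :=
          (Finset.mem_filter.1 ha).2
        have hni : ¬ Integrable (fun ω => if act (j+1) ω = a then (1:ℝ) else 0) μ :=
          fun h => hna h.1
        have h0 : μ[(fun ω' => if act (j+1) ω' = a then (1:ℝ) else 0) | m j] = 0 :=
          condExp_of_not_integrable hni
        have hc := hcond' j (fun b => if b = a then (1:ℝ) else 0)
        filter_upwards [hc] with ω hω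
        simp only [h0, Pi.zero_apply, mul_ite, mul_one, mul_zero, Finset.sum_ite_eq',
          Finset.mem_univ, if_true] at hω
        exact hω.symm
      have hae : ∀ᵐ ω ∂μ, ∀ b : A, b ∈ T → L (j+1) ω b = 0 := by
        rw [ae_all_iff]
        intro b
        by_cases hb : b ∈ T
        · filter_upwards [hLz b hb] with ω hω _; exact hω
        · filter_upwards with ω hb'; exact absurd hb' hb
      have hTsum : ∀ ω, (if act (j+1) ω ∈ T then (1:ℝ) else 0) =
          1 - ∑ a ∈ Tᶜ, (if act (j+1) ω = a then (1:ℝ) else 0) := by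
        intro ω
        have h1 : (∑ a ∈ T, (if act (j+1) ω = a then (1:ℝ) else 0)) +
            ∑ a ∈ Tᶜ, (if act (j+1) ω = a then (1:ℝ) else 0) = 1 := by
          rw [Finset.sum_add_sum_compl]
          simp [Finset.sum_ite_eq]
        have h2 : ∑ a ∈ T, (if act (j+1) ω = a then (1:ℝ) else 0) =
            (if act (j+1) ω ∈ T then (1:ℝ) else 0) := by
          simp [Finset.sum_ite_eq]
        linarith
      have hT1m : AEStronglyMeasurable (fun ω => if act (j+1) ω ∈ T then (1:ℝ) else 0) μ := by
        rw [show (fun ω => if act (j+1) ω ∈ T then (1:ℝ) else 0) =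
            fun ω => 1 - ∑ a ∈ Tᶜ, (if act (j+1) ω = a then (1:ℝ) else 0) from funext hTsum]
        apply AEStronglyMeasurable.sub aestronglyMeasurable_const
        apply Finset.aestronglyMeasurable_fun_sum
        intro a ha
        have hnot : a ∉ T := Finset.mem_compl.1 ha
        by_contra hcm
        exact hnot (Finset.mem_filter.2 ⟨Finset.mem_univ _, hcm⟩)
      have hT1int : Integrable (fun ω => if act (j+1) ω ∈ T then (1:ℝ) else 0) μ :=
        ⟨hT1m, HasFiniteIntegral.of_bounded (C := 1)
          (ae_of_all μ fun ω => by rw [Real.norm_eq_abs]; split <;> simp)⟩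
      have hcd := hcond' j (fun b => if b ∈ T then (1:ℝ) else 0)
      have hce0 : μ[(fun ω' => if act (j+1) ω' ∈ T then (1:ℝ) else 0) | m j] =ᵐ[μ] 0 := by
        filter_upwards [hcd, hae] with ω h1 h2
        rw [Pi.zero_apply, h1]
        rw [Finset.sum_eq_zero]
        intro b _
        by_cases hb : b ∈ T
        · simp [h2 b hb]
        · simp [hb]
      have hint0 : ∫ ω, (if act (j+1) ω ∈ T then (1:ℝ) else 0) ∂μ = 0 := by
        rw [← integral_condExp (hm j)
          (f := fun ω' => if act (j+1) ω' ∈ T then (1:ℝ) else 0)]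
        rw [integral_congr_ae hce0]
        simp
      have hzz : (fun ω => if act (j+1) ω ∈ T then (1:ℝ) else 0) =ᵐ[μ] 0 := by
        refine (integral_eq_zero_iff_of_nonneg ?_ hT1int).1 hint0
        intro ω
        simp only [Pi.zero_apply]
        split <;> norm_num
      intro a ha
      filter_upwards [hzz] with ω hω
      simp only [Pi.zero_apply] at hω ⊢
      by_cases hb : act (j+1) ω = a
      · exfalso
        rw [if_pos (hb ▸ ha)] at hω
        norm_num at hω
      · rw [if_neg hb]
    intro a
    by_cases ha : a ∈ T
    · exact (aestronglyMeasurable_const (b := (0:ℝ))).congr (hTz a ha).symm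
    · by_contra hc
      exact ha (Finset.mem_filter.2 ⟨Finset.mem_univ _, hc⟩)
  -- composition with the action
  have hcomp : ∀ j : ℕ, ∀ H : Ω → A → ℝ, (∀ a, AEStronglyMeasurable (fun ω => H ω a) μ) →
      AEStronglyMeasurable (fun ω => H ω (act (j+1) ω)) μ := by
    intro j H hH
    have heq : (fun ω => H ω (act (j+1) ω)) =
        fun ω => ∑ a, (if act (j+1) ω = a then (1:ℝ) else 0) * H ω a := by
      funext ω
      rw [Finset.sum_congr rfl (fun a _ => boole_mul (act (j+1) ω = a) (H ω a))]
      simp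
    rw [heq]
    exact Finset.aestronglyMeasurable_fun_sum _ fun a _ => (hind j a).mul (hH a)
  -- measurability of Rcum coordinates
  have hRcm : ∀ k (i : ι), AEStronglyMeasurable (fun ω => Rcum k ω i) μ := by
    intro k i
    have : (fun ω => Rcum k ω i) =
        fun ω => ∑ s ∈ Finset.Icc 1 k, ρ i (act s ω) (rew s ω) := by
      funext ω; exact hR k ω i
    rw [this]
    apply Finset.aestronglyMeasurable_fun_sum
    intro s hs
    have hs1 : 1 ≤ s := (Finset.mem_Icc.1 hs).1
    obtain ⟨j, rfl⟩ : ∃ j, s = j + 1 := ⟨s - 1, by omega⟩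
    apply hcomp j (fun ω a => ρ i a (rew (j+1) ω))
    intro a
    have : (fun ω => ρ i a (rew (j+1) ω)) =
        fun ω => (∑ s', φ i a s' * rew (j+1) ω s') - rew (j+1) ω a := by
      funext ω; exact hρ i a _
    rw [this]
    exact ((Finset.measurable_sum univ fun s' _ =>
      (hrewA j s').const_mul (φ i a s')).sub (hrewA j a)).aestronglyMeasurable
  -- measurability and integrability of G
  have hGm : ∀ k, AEStronglyMeasurable (G k) μ := by
    intro k
    rw [show G k = fun ω => Real.log (∑ i, Real.exp (η * Rcum k ω i)) / η from funext (hG k)]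
    apply AEMeasurable.aestronglyMeasurable
    apply AEMeasurable.div_const
    apply Measurable.comp_aemeasurable Real.measurable_log
    exact Finset.aemeasurable_fun_sum _ fun i _ =>
      Real.measurable_exp.comp_aemeasurable (((hRcm k i).aemeasurable).const_mul η)
  have hGint : ∀ k, Integrable (G k) μ := by
    intro k
    refine ⟨hGm k, HasFiniteIntegral.of_bounded
      (C := Real.log (Fintype.card ι) / η + k * U) (ae_of_all μ fun ω => ?_)⟩
    rw [Real.norm_eq_abs, hG k ω]
    exact my_lse_bound η (k * U) hη (by positivity) _ (fun i => hRb k ω i)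
  -- integrability of W
  have hCb : ∀ j ω a, |∑ i, g (Rtil j ω) i * ρ i a (rew (j+1) ω)| ≤ U := by
    intro j ω a
    calc |∑ i, g (Rtil j ω) i * ρ i a (rew (j+1) ω)|
        ≤ ∑ i, |g (Rtil j ω) i * ρ i a (rew (j+1) ω)| := Finset.abs_sum_le_sum_abs _ _
      _ ≤ ∑ i, g (Rtil j ω) i * U := by
          apply Finset.sum_le_sum
          intro i _
          rw [abs_mul, abs_of_nonneg (hgpos _ i)]
          exact mul_le_mul_of_nonneg_left (hρb _ _ _ (fun a' => hrew _ ω a')) (hgpos _ i)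
      _ = U := by rw [← Finset.sum_mul, hgsum, one_mul]
  have hgm : ∀ j (i : ι), Measurable[m j] (fun ω => g (Rtil j ω) i) := by
    intro j i
    have h1 : ∀ i' : ι, Measurable[m j] (fun ω => Rtil j ω i') := fun i' =>
      (measurable_pi_apply i').comp (hRtilm' j)
    simp only [hg]
    exact (((h1 i).const_mul η).exp).div
      (Finset.measurable_sum univ fun i' _ => ((h1 i').const_mul η).exp)
  have hρmj : ∀ j (i : ι) (a : A), Measurable[m j] (fun ω => ρ i a (rew (j+1) ω)) := by
    intro j i a
    have h3 : ∀ a' : A, Measurable[m j] (fun ω => rew (j+1) ω a') := fun a' =>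
      (measurable_pi_apply a').comp (hrewm' j)
    simp only [hρ]
    exact (Finset.measurable_sum univ fun s' _ => (h3 s').const_mul (φ i a s')).sub (h3 a)
  have hCm : ∀ j (a : A), Measurable[m j] (fun ω => ∑ i, g (Rtil j ω) i * ρ i a (rew (j+1) ω)) :=
    fun j a => Finset.measurable_sum univ fun i _ => (hgm j i).mul (hρmj j i a)
  have hWm : ∀ j, AEStronglyMeasurable
      (fun ω => ∑ i, g (Rtil j ω) i * ρ i (act (j+1) ω) (rew (j+1) ω)) μ := by
    intro j
    exact hcomp j (fun ω a => ∑ i, g (Rtil j ω) i * ρ i a (rew (j+1) ω))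
      (fun a => ((hCm j a).mono (hm j) le_rfl).aestronglyMeasurable)
  have hWint : ∀ j, Integrable
      (fun ω => ∑ i, g (Rtil j ω) i * ρ i (act (j+1) ω) (rew (j+1) ω)) μ :=
    fun j => ⟨hWm j, HasFiniteIntegral.of_bounded (C := U)
      (ae_of_all μ fun ω => by rw [Real.norm_eq_abs]; exact hCb j ω _)⟩
  -- the mean-zero property of the fixed-point strategy
  have hW0 : ∀ j : ℕ, ∫ ω, (∑ i, g (Rtil j ω) i * ρ i (act (j+1) ω) (rew (j+1) ω)) ∂μ = 0 := by
    intro j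
    haveI := hsf j
    set C : A → Ω → ℝ := fun a ω => ∑ i, g (Rtil j ω) i * ρ i a (rew (j+1) ω) with hCdef
    have hdecomp : (fun ω => ∑ i, g (Rtil j ω) i * ρ i (act (j+1) ω) (rew (j+1) ω)) =
        fun ω => ∑ a, C a ω * (if act (j+1) ω = a then (1:ℝ) else 0) := by
      funext ω
      simp only [hCdef, mul_ite, mul_one, mul_zero]
      rw [eq_comm]
      simp [Finset.sum_ite_eq]
    have hCint : ∀ a, Integrable (fun ω => C a ω * (if act (j+1) ω = a then (1:ℝ) else 0)) μ := by
      intro a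
      refine ⟨(((hCm j a).mono (hm j) le_rfl).aestronglyMeasurable).mul (hind j a),
        HasFiniteIntegral.of_bounded (C := U) (ae_of_all μ fun ω => ?_)⟩
      rw [Real.norm_eq_abs, abs_mul]
      have h2 : |if act (j+1) ω = a then (1:ℝ) else 0| ≤ 1 := by split <;> simp
      calc |C a ω| * |if act (j+1) ω = a then (1:ℝ) else 0| ≤ U * 1 :=
            mul_le_mul (hCb j ω a) h2 (abs_nonneg _) hU
        _ = U := mul_one U
    have hindint : ∀ a, Integrable (fun ω => if act (j+1) ω = a then (1:ℝ) else 0) μ :=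
      fun a => ⟨hind j a, HasFiniteIntegral.of_bounded (C := 1)
        (ae_of_all μ fun ω => by rw [Real.norm_eq_abs]; split <;> simp)⟩
    have hLb : ∀ ω a, |L (j+1) ω a| ≤ 1 := by
      intro ω a
      rw [abs_of_nonneg ((hLsimplex (j+1) ω).1 a)]
      exact le_trans (Finset.single_le_sum (fun b _ => (hLsimplex (j+1) ω).1 b)
        (Finset.mem_univ a)) (le_of_eq (hLsimplex (j+1) ω).2)
    have hLint : ∀ a, Integrable (fun ω => C a ω * L (j+1) ω a) μ := by
      intro a
      refine ⟨(((hCm j a).mono (hm j) le_rfl).mul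
        (((measurable_pi_apply a).comp (hLm' j)).mono (hm j) le_rfl)).aestronglyMeasurable,
        HasFiniteIntegral.of_bounded (C := U) (ae_of_all μ fun ω => ?_)⟩
      rw [Real.norm_eq_abs, abs_mul]
      calc |C a ω| * |L (j+1) ω a| ≤ U * 1 :=
            mul_le_mul (hCb j ω a) (hLb ω a) (abs_nonneg _) hU
        _ = U := mul_one U
    have hkey : ∀ a, ∫ ω, C a ω * (if act (j+1) ω = a then (1:ℝ) else 0) ∂μ =
        ∫ ω, C a ω * L (j+1) ω a ∂μ := by
      intro a
      have hpull : μ[(C a * fun ω => if act (j+1) ω = a then (1:ℝ) else 0) | m j] =ᵐ[μ]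
          C a * μ[(fun ω => if act (j+1) ω = a then (1:ℝ) else 0) | m j] :=
        condExp_stronglyMeasurable_mul_of_bound (hm j) (hCm j a).stronglyMeasurable
          (hindint a) U (ae_of_all μ fun ω => by rw [Real.norm_eq_abs]; exact hCb j ω a)
      have hcm := hcond' j (fun b => if b = a then (1:ℝ) else 0)
      calc ∫ ω, C a ω * (if act (j+1) ω = a then (1:ℝ) else 0) ∂μ
          = ∫ ω, (μ[(C a * fun ω' => if act (j+1) ω' = a then (1:ℝ) else 0) | m j]) ω ∂μ :=
            (integral_condExp (hm j)).symm
        _ = ∫ ω, C a ω * L (j+1) ω a ∂μ := by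
            apply integral_congr_ae
            filter_upwards [hpull, hcm] with ω h1 h2
            rw [h1, Pi.mul_apply]
            congr 1
            simp only [mul_ite, mul_one, mul_zero, Finset.sum_ite_eq', Finset.mem_univ,
              if_true] at h2
            exact h2
    have hzero : ∀ ω, ∑ a, C a ω * L (j+1) ω a = 0 := by
      intro ω
      have hfixg : ∀ a, ∑ i, g (Rtil j ω) i * (∑ b, L (j+1) ω b * φ i b a) = L (j+1) ω a := by
        intro a
        have h1 := hfix' j ω a
        have hfg : ∀ i X, g (Rtil j ω) i * X = (f (Rtil j ω) i * X) / ∑ i', f (Rtil j ω) i' := by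
          intro i X
          rw [hg, hf]
          rw [show (∑ i', f (Rtil j ω) i') = ∑ j', Real.exp (η * Rtil j ω j') from
            Finset.sum_congr rfl fun i' _ => hf _ i']
          ring
        calc ∑ i, g (Rtil j ω) i * (∑ b, L (j+1) ω b * φ i b a)
            = ∑ i, (f (Rtil j ω) i * (∑ b, L (j+1) ω b * φ i b a)) / ∑ i', f (Rtil j ω) i' :=
              Finset.sum_congr rfl fun i _ => hfg i _
          _ = (∑ i, f (Rtil j ω) i * (∑ b, L (j+1) ω b * φ i b a)) / ∑ i', f (Rtil j ω) i' :=
              (Finset.sum_div _ _ _).symm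
          _ = L (j+1) ω a := h1
      have := my_fix_zero (fun i => g (Rtil j ω) i) φ (L (j+1) ω) (rew (j+1) ω)
        (hgsum _) hfixg
      calc ∑ a, C a ω * L (j+1) ω a
          = ∑ a, (∑ i, g (Rtil j ω) i *
              ((∑ s, φ i a s * rew (j+1) ω s) - rew (j+1) ω a)) * L (j+1) ω a := by
            refine Finset.sum_congr rfl fun a _ => ?_
            congr 1
            exact Finset.sum_congr rfl fun i _ => by rw [hρ]
        _ = 0 := this
    calc ∫ ω, (∑ i, g (Rtil j ω) i * ρ i (act (j+1) ω) (rew (j+1) ω)) ∂μ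
        = ∫ ω, ∑ a, C a ω * (if act (j+1) ω = a then (1:ℝ) else 0) ∂μ := by rw [hdecomp]
      _ = ∑ a, ∫ ω, C a ω * (if act (j+1) ω = a then (1:ℝ) else 0) ∂μ :=
          integral_finset_sum _ (fun a _ => hCint a)
      _ = ∑ a, ∫ ω, C a ω * L (j+1) ω a ∂μ := Finset.sum_congr rfl fun a _ => hkey a
      _ = ∫ ω, ∑ a, C a ω * L (j+1) ω a ∂μ := (integral_finset_sum _ (fun a _ => hLint a)).symm
      _ = 0 := by
          rw [show (fun ω => ∑ a, C a ω * L (j+1) ω a) = fun _ => (0:ℝ) from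
            funext fun ω => hzero ω]
          simp
  -- one-round inequality
  have hstep : ∀ j : ℕ, ∫ ω, G (j+1) ω ∂μ ≤ ∫ ω, G j ω ∂μ +
      U * ∫ ω, ∑ i, |g (Rcum j ω) i - g (Rtil j ω) i| ∂μ + η * U ^ 2 / 2 := by
    intro j
    have hpt : ∀ ω, G (j+1) ω ≤ G j ω +
        ((∑ i, g (Rtil j ω) i * ρ i (act (j+1) ω) (rew (j+1) ω)) +
          (U * ∑ i, |g (Rcum j ω) i - g (Rtil j ω) i| + η * U ^ 2 / 2)) := by
      intro ω
      set y : ι → ℝ := fun i => ρ i (act (j+1) ω) (rew (j+1) ω) with hy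
      have hyb : ∀ i, |y i| ≤ U := fun i => hρb _ _ _ (fun a => hrew _ ω a)
      have hRadd : ∀ i, Rcum (j+1) ω i = Rcum j ω i + y i := by
        intro i
        rw [hR, hR, hy, Finset.sum_Icc_succ_top (by omega)]
      have h1 := my_lse_step η U hη (fun i => Rcum j ω i) y hyb
      have hG1 : G (j+1) ω = Real.log (∑ i, Real.exp (η * (Rcum j ω i + y i))) / η := by
        rw [hG (j+1) ω]
        congr 2
        exact Finset.sum_congr rfl fun i _ => by rw [hRadd i]
      have hgid : ∀ i, Real.exp (η * Rcum j ω i) / (∑ j', Real.exp (η * Rcum j ω j')) =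
          g (Rcum j ω) i := fun i => (hg _ i).symm
      rw [hG1]
      have h2 : ∑ i, g (Rcum j ω) i * y i ≤ ∑ i, g (Rtil j ω) i * y i +
          U * ∑ i, |g (Rcum j ω) i - g (Rtil j ω) i| := by
        have h3 : ∑ i, g (Rcum j ω) i * y i - ∑ i, g (Rtil j ω) i * y i =
            ∑ i, (g (Rcum j ω) i - g (Rtil j ω) i) * y i := by
          rw [← Finset.sum_sub_distrib]
          exact Finset.sum_congr rfl fun i _ => (sub_mul _ _ _).symm
        have h4 : ∑ i, (g (Rcum j ω) i - g (Rtil j ω) i) * y i ≤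
            U * ∑ i, |g (Rcum j ω) i - g (Rtil j ω) i| := by
          rw [Finset.mul_sum]
          apply Finset.sum_le_sum
          intro i _
          calc (g (Rcum j ω) i - g (Rtil j ω) i) * y i
              ≤ |(g (Rcum j ω) i - g (Rtil j ω) i) * y i| := le_abs_self _
            _ = |g (Rcum j ω) i - g (Rtil j ω) i| * |y i| := abs_mul _ _
            _ ≤ |g (Rcum j ω) i - g (Rtil j ω) i| * U :=
                mul_le_mul_of_nonneg_left (hyb i) (abs_nonneg _)
            _ = U * |g (Rcum j ω) i - g (Rtil j ω) i| := mul_comm _ _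
        linarith
      have h5 : (∑ i, Real.exp (η * Rcum j ω i) / (∑ j', Real.exp (η * Rcum j ω j')) * y i)
          = ∑ i, g (Rcum j ω) i * y i :=
        Finset.sum_congr rfl fun i _ => by rw [hgid i]
      rw [h5] at h1
      rw [hG j ω]
      linarith
    have hBint : Integrable (fun ω =>
        U * ∑ i, |g (Rcum j ω) i - g (Rtil j ω) i| + η * U ^ 2 / 2) μ :=
      ((hinterr j).const_mul U).add (integrable_const _)
    have hWBint : Integrable (fun ω =>
        (∑ i, g (Rtil j ω) i * ρ i (act (j+1) ω) (rew (j+1) ω)) +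
          (U * ∑ i, |g (Rcum j ω) i - g (Rtil j ω) i| + η * U ^ 2 / 2)) μ :=
      (hWint j).add hBint
    have hRHSint : Integrable (fun ω => G j ω +
        ((∑ i, g (Rtil j ω) i * ρ i (act (j+1) ω) (rew (j+1) ω)) +
          (U * ∑ i, |g (Rcum j ω) i - g (Rtil j ω) i| + η * U ^ 2 / 2))) μ :=
      (hGint j).add hWBint
    have hle := integral_mono (hGint (j+1)) hRHSint hpt
    have e1 : ∫ ω, (G j ω +
        ((∑ i, g (Rtil j ω) i * ρ i (act (j+1) ω) (rew (j+1) ω)) +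
          (U * ∑ i, |g (Rcum j ω) i - g (Rtil j ω) i| + η * U ^ 2 / 2))) ∂μ =
        (∫ ω, G j ω ∂μ) +
        ∫ ω, ((∑ i, g (Rtil j ω) i * ρ i (act (j+1) ω) (rew (j+1) ω)) +
          (U * ∑ i, |g (Rcum j ω) i - g (Rtil j ω) i| + η * U ^ 2 / 2)) ∂μ :=
      integral_add (hGint j) hWBint
    have e2 : ∫ ω, ((∑ i, g (Rtil j ω) i * ρ i (act (j+1) ω) (rew (j+1) ω)) +
          (U * ∑ i, |g (Rcum j ω) i - g (Rtil j ω) i| + η * U ^ 2 / 2)) ∂μ =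
        (∫ ω, (∑ i, g (Rtil j ω) i * ρ i (act (j+1) ω) (rew (j+1) ω)) ∂μ) +
        ∫ ω, (U * ∑ i, |g (Rcum j ω) i - g (Rtil j ω) i| + η * U ^ 2 / 2) ∂μ :=
      integral_add (hWint j) hBint
    have e3 : ∫ ω, (U * ∑ i, |g (Rcum j ω) i - g (Rtil j ω) i| + η * U ^ 2 / 2) ∂μ =
        (∫ ω, U * ∑ i, |g (Rcum j ω) i - g (Rtil j ω) i| ∂μ) +
        ∫ _ω, (η * U ^ 2 / 2 : ℝ) ∂μ :=
      integral_add ((hinterr j).const_mul U) (integrable_const _)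
    have e4 : ∫ ω, U * ∑ i, |g (Rcum j ω) i - g (Rtil j ω) i| ∂μ =
        U * ∫ ω, ∑ i, |g (Rcum j ω) i - g (Rtil j ω) i| ∂μ := integral_const_mul _ _
    have e5 : ∫ _ω, (η * U ^ 2 / 2 : ℝ) ∂μ = η * U ^ 2 / 2 := by simp
    rw [e1, e2, e3, e4, e5, hW0 j] at hle
    linarith
  -- induction
  have hmain : ∀ j : ℕ, ∫ ω, G j ω ∂μ ≤ Real.log (Fintype.card ι) / η +
      U * (∑ k ∈ Finset.Icc 1 j, ∫ ω, ∑ i, |g (Rcum (k-1) ω) i - g (Rtil (k-1) ω) i| ∂μ) +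
      j * (η * U ^ 2 / 2) := by
    intro j
    induction j with
    | zero =>
        have h0 : ∀ ω, G 0 ω = Real.log (Fintype.card ι) / η := by
          intro ω
          have : ∀ i, Rcum 0 ω i = 0 := by
            intro i; rw [hR]; simp
          rw [hG 0 ω]
          simp [this]
        rw [show (fun ω => G 0 ω) = fun _ => Real.log (Fintype.card ι) / η from funext h0]
        simp
    | succ j ih =>
        have hsum : ∑ k ∈ Finset.Icc 1 (j+1),
            ∫ ω, ∑ i, |g (Rcum (k-1) ω) i - g (Rtil (k-1) ω) i| ∂μ =
            (∑ k ∈ Finset.Icc 1 j, ∫ ω, ∑ i, |g (Rcum (k-1) ω) i - g (Rtil (k-1) ω) i| ∂μ) +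
            ∫ ω, ∑ i, |g (Rcum j ω) i - g (Rtil j ω) i| ∂μ := by
          rw [Finset.sum_Icc_succ_top (by omega)]
          simp
        have := hstep j
        rw [hsum]
        push_cast
        linarith
  -- conclusion
  have hSnonneg : 0 ≤ ∑ k ∈ Finset.Icc 1 t,
      ∫ ω, ∑ i, |g (Rcum (k-1) ω) i - g (Rtil (k-1) ω) i| ∂μ := by
    apply Finset.sum_nonneg
    intro k _
    apply integral_nonneg
    intro ω
    exact Finset.sum_nonneg fun i _ => abs_nonneg _
  have htpos : (0:ℝ) < t := by exact_mod_cast ht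
  have h1 : ∫ ω, (Finset.univ.sup' Finset.univ_nonempty (Rcum t ω)) / t ∂μ ≤
      ∫ ω, G t ω / t ∂μ := by
    apply integral_mono ((hintmax t).div_const t) ((hGint t).div_const t)
    intro ω
    have hsl := my_sup_le_lse η hη (Rcum t ω)
    rw [← hG t ω] at hsl
    exact (div_le_div_iff_of_pos_right htpos).2 hsl
  have htne : (t:ℝ) ≠ 0 := ne_of_gt htpos
  set S := ∑ k ∈ Finset.Icc 1 t,
      ∫ ω, ∑ i, |g (Rcum (k-1) ω) i - g (Rtil (k-1) ω) i| ∂μ with hS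
  have h2 : ∫ ω, G t ω / t ∂μ = (∫ ω, G t ω ∂μ) / t := integral_div _ _
  have h3 := hmain t
  have h4 : (∫ ω, G t ω ∂μ) / t ≤ (Real.log (Fintype.card ι) / η + U * S +
      t * (η * U ^ 2 / 2)) / t := (div_le_div_iff_of_pos_right htpos).2 h3
  have h5 : (Real.log (Fintype.card ι) / η + U * S + t * (η * U ^ 2 / 2)) / t =
      (1 / (t:ℝ)) * (Real.log (Fintype.card ι) / η + U * S) + η * U ^ 2 / 2 := by
    field_simp
  have hUS : 0 ≤ U * S := mul_nonneg hU hSnonneg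
  have h6 : (1 / (t:ℝ)) * (Real.log (Fintype.card ι) / η + U * S) ≤
      (1 / (t:ℝ)) * (Real.log (Fintype.card ι) / η + 2 * U * S) := by
    apply mul_le_mul_of_nonneg_left _ (by positivity)
    linarith
  calc ∫ ω, (Finset.univ.sup' Finset.univ_nonempty (Rcum t ω)) / t ∂μ
      ≤ ∫ ω, G t ω / t ∂μ := h1
    _ = (∫ ω, G t ω ∂μ) / t := h2
    _ ≤ (Real.log (Fintype.card ι) / η + U * S + t * (η * U ^ 2 / 2)) / t := h4
    _ = (1 / (t:ℝ)) * (Real.log (Fintype.card ι) / η + U * S) + η * U ^ 2 / 2 := h5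
    _ ≤ (1 / (t:ℝ)) * (Real.log (Fintype.card ι) / η + 2 * U * S) + η * U ^ 2 / 2 := by
        linarith
    _ = _ := by rw [hS]
end
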